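/- arXiv:math/0611818 — 5 statements merged into one kernel-verified Lean document; each statement's English description precedes it below -/
import Mathlib

section
/- Let a > 0 and let B = {x ∈ ℝ³ : |x| < a} with Lebesgue measure. Let (Ω_j)_{j∈ℤ} be a family of essentially bounded measurable functions Ω_j : B → ℂ with Σ_{j∈ℤ}(1+|j|)·‖Ω_j‖_{L^∞(B)} < ∞. Then there is a constant C ≥ 0, depending only on (Ω_j), such that for every family (y_n)_{n∈ℤ} of functions y_n ∈ L²(B) with Σ_{n∈ℤ}(1+|n|)^{4/3}‖y_n‖²_{L²(B)} < ∞, the following hold: for each n the series Σ_{j∈ℤ} Ω_j·y_{n−j} converges in L²(B), and Σ_{n∈ℤ}(1+|n|)^{4/3}‖Σ_{j∈ℤ} Ω_j·y_{n−j}‖²_{L²(B)} ≤ C·Σ_{n∈ℤ}(1+|n|)^{4/3}‖y_n‖²_{L²(B)}. One may take C = (Σ_{j∈ℤ}(1+|j|)^{2/3}‖Ω_j‖_{L^∞(B)})². -/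
/-!
The weight `(1 + |n|)^(2/3)` is submultiplicative, so the weighted `L²` norm of
`Σ_j Ω_j y_{n-j}` is dominated by the discrete convolution of the sequences
`(1 + |j|)^(2/3) ‖Ω_j‖_∞` and `(1 + |n|)^(2/3) ‖y_n‖₂`. Young's inequality `ℓ¹ ⋆ ℓ² ⊆ ℓ²`, proved
from `2ab ≤ a² + b²` and translation invariance of `Σ_n`, bounds the latter. The same domination,
with `‖Ω_j y_m‖₂ ≤ ‖Ω_j‖_∞ ‖y_m‖₂`, makes each series `Σ_j Ω_j y_{n-j}` absolutely convergent
in `L²`.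
-/

open MeasureTheory Filter Topology
open scoped ENNReal NNReal

noncomputable def ballMeasure (a : ℝ) : Measure (EuclideanSpace ℝ (Fin 3)) :=
  volume.restrict (Metric.ball (0 : EuclideanSpace ℝ (Fin 3)) a)

theorem one_add_abs_add_le {R : Type*} [CommRing R] [LinearOrder R] [IsStrictOrderedRing R]
    (a b : R) :
    1 + |a + b| ≤ (1 + |a|) * (1 + |b|) := by
  nlinarith [abs_add_le a b, abs_nonneg a, abs_nonneg b, mul_nonneg (abs_nonneg a) (abs_nonneg b)]

theorem one_add_abs_rpow_add_le {s : ℝ} (hs : 0 ≤ s) (m k : ℤ) :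
    (1 + |m + k| : ℝ) ^ s ≤ (1 + |m| : ℝ) ^ s * (1 + |k| : ℝ) ^ s := by
  rw [← Real.mul_rpow (by positivity) (by positivity)]
  exact Real.rpow_le_rpow (by positivity) (by exact_mod_cast one_add_abs_add_le m k) hs

section

variable {G : Type*} [AddGroup G]

theorem ENNReal.tsum_sq_tsum_mul_sub_le (v u : G → ℝ≥0) :
    ∑' n, (∑' j, (v j * u (n - j) : ℝ≥0∞)) ^ 2 ≤
      (∑' j, (v j : ℝ≥0∞)) ^ 2 * ∑' n, (u n : ℝ≥0∞) ^ 2 := by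
  set V := ∑' j, (v j : ℝ≥0∞)
  set U := ∑' n, (u n : ℝ≥0∞) ^ 2
  have hshift (j : G) : ∑' n, (u (n - j) : ℝ≥0∞) ^ 2 = U :=
    (Equiv.subRight j).tsum_eq fun m => (u m : ℝ≥0∞) ^ 2
  have amgm (j k n : G) : 2 * ((u (n - j) : ℝ≥0∞) * u (n - k)) ≤
      (u (n - j) : ℝ≥0∞) ^ 2 + (u (n - k) : ℝ≥0∞) ^ 2 := by
    rw [← mul_assoc]
    exact_mod_cast two_mul_le_add_sq (u (n - j)) (u (n - k))
  rw [← ENNReal.mul_le_mul_iff_left two_ne_zero ENNReal.ofNat_ne_top]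
  calc (∑' n, (∑' j, (v j * u (n - j) : ℝ≥0∞)) ^ 2) * 2
      = ∑' n, ∑' j, ∑' k, (v j : ℝ≥0∞) * v k * (2 * (u (n - j) * u (n - k))) := by
        simp only [sq, ← ENNReal.tsum_mul_right, ← ENNReal.tsum_mul_left]
        exact tsum_congr fun n => tsum_congr fun j => tsum_congr fun k => by ring
    _ ≤ ∑' n, ∑' j, ∑' k,
          (v j : ℝ≥0∞) * v k * ((u (n - j) : ℝ≥0∞) ^ 2 + (u (n - k) : ℝ≥0∞) ^ 2) := by
        gcongr with n j k
        exact amgm j k n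
    _ = ∑' j, ∑' k, ∑' n,
          (v j : ℝ≥0∞) * v k * ((u (n - j) : ℝ≥0∞) ^ 2 + (u (n - k) : ℝ≥0∞) ^ 2) := by
        rw [ENNReal.tsum_comm]
        exact tsum_congr fun j => ENNReal.tsum_comm
    _ = V ^ 2 * U * 2 := by
        simp only [ENNReal.tsum_mul_left, ENNReal.tsum_add, hshift, ENNReal.tsum_mul_right]
        ring

theorem summable_tsum_mul_sub_and_tsum_sq_le {v u : G → ℝ} (hv0 : ∀ j, 0 ≤ v j)
    (hu0 : ∀ n, 0 ≤ u n) (hv : Summable v) (hu : Summable fun n => u n ^ 2) :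
    (∀ n, Summable fun j => v j * u (n - j)) ∧
      Summable (fun n => (∑' j, v j * u (n - j)) ^ 2) ∧
      ∑' n, (∑' j, v j * u (n - j)) ^ 2 ≤ (∑' j, v j) ^ 2 * ∑' n, u n ^ 2 := by
  -- All summability claims follow from the finiteness of the bound in `ℝ≥0∞`.
  lift v to G → ℝ≥0 using hv0
  lift u to G → ℝ≥0 using hu0
  simp only [← NNReal.coe_pow, ← NNReal.coe_mul, NNReal.summable_coe, ← NNReal.coe_tsum]
    at hv hu ⊢
  have young := ENNReal.tsum_sq_tsum_mul_sub_le v u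
  simp only [← ENNReal.coe_pow, ← ENNReal.coe_mul, ← ENNReal.coe_tsum hv,
    ← ENNReal.coe_tsum hu] at young
  have hconv (n : G) : Summable fun j => v j * u (n - j) := by
    rw [← ENNReal.tsum_coe_ne_top_iff_summable]
    have hsq_ne_top :=
      ENNReal.ne_top_of_tsum_ne_top (ne_top_of_le_ne_top ENNReal.coe_ne_top young) n
    exact (ENNReal.pow_ne_top_iff.1 hsq_ne_top).resolve_right two_ne_zero
  simp only [← ENNReal.coe_tsum (hconv _), ← ENNReal.coe_pow] at young
  have hsq : Summable fun n => (∑' j, v j * u (n - j)) ^ 2 :=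
    ENNReal.tsum_coe_ne_top_iff_summable.1 (ne_top_of_le_ne_top ENNReal.coe_ne_top young)
  rw [← ENNReal.coe_tsum hsq, ENNReal.coe_le_coe] at young
  exact ⟨hconv, hsq, by exact_mod_cast young⟩

theorem summable_weighted_tsum_mul_sub_and_tsum_sq_le {w K N : G → ℝ} (hw : ∀ n, 0 < w n)
    (hw_add : ∀ j k, w (j + k) ≤ w j * w k) (hK0 : ∀ j, 0 ≤ K j) (hN0 : ∀ n, 0 ≤ N n)
    (hwK : Summable fun j => w j * K j) (hwN : Summable fun n => (w n * N n) ^ 2) :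
    (∀ n, Summable fun j => K j * N (n - j)) ∧
      Summable (fun n => (w n * ∑' j, K j * N (n - j)) ^ 2) ∧
      ∑' n, (w n * ∑' j, K j * N (n - j)) ^ 2 ≤
        (∑' j, w j * K j) ^ 2 * ∑' n, (w n * N n) ^ 2 := by
  obtain ⟨hconv, hsq, hle⟩ := summable_tsum_mul_sub_and_tsum_sq_le
    (fun j => mul_nonneg (hw j).le (hK0 j)) (fun n => mul_nonneg (hw n).le (hN0 n)) hwK hwN
  have hpt (n j : G) : w n * (K j * N (n - j)) ≤ w j * K j * (w (n - j) * N (n - j)) :=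
    calc w n * (K j * N (n - j)) ≤ w j * w (n - j) * (K j * N (n - j)) := by
          gcongr
          · exact mul_nonneg (hK0 j) (hN0 _)
          · simpa only [sub_add_cancel, mul_comm (w j)] using hw_add (n - j) j
      _ = w j * K j * (w (n - j) * N (n - j)) := by ring
  have hKN (n : G) : Summable fun j => K j * N (n - j) :=
    (summable_mul_left_iff (hw n).ne').1 <| (hconv n).of_nonneg_of_le
      (fun j => mul_nonneg (hw n).le (mul_nonneg (hK0 j) (hN0 _))) (hpt n)
  have hbound (n : G) : (w n * ∑' j, K j * N (n - j)) ^ 2 ≤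
      (∑' j, w j * K j * (w (n - j) * N (n - j))) ^ 2 := by
    gcongr
    · exact mul_nonneg (hw n).le (tsum_nonneg fun j => mul_nonneg (hK0 j) (hN0 _))
    · rw [← tsum_mul_left]
      exact ((hKN n).mul_left _).tsum_le_tsum (hpt n) (hconv n)
  have hsum := hsq.of_nonneg_of_le (fun n => sq_nonneg _) hbound
  exact ⟨hKN, hsum, (hsum.tsum_le_tsum hbound hsq).trans hle⟩

end

theorem MeasureTheory.tendsto_eLpNorm_sum_sub_of_hasSum_toLp {α E ι : Type*} [MeasurableSpace α]
    {μ : Measure α} [NormedAddCommGroup E] {p : ℝ≥0∞} [Fact (1 ≤ p)] {f : ι → α → E}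
    (hf : ∀ i, MemLp (f i) p μ) {S : Lp E p μ} (hS : HasSum (fun i => (hf i).toLp (f i)) S) :
    Tendsto (fun F : Finset ι => (eLpNorm (fun x => ∑ i ∈ F, f i x - S x) p μ).toReal)
      atTop (𝓝 0) := by
  refine (tendsto_iff_norm_sub_tendsto_zero.mp hS).congr fun F => ?_
  rw [Lp.norm_def]
  congr 1
  refine eLpNorm_congr_ae ?_
  filter_upwards [Lp.coeFn_sub (∑ i ∈ F, (hf i).toLp (f i)) S,
    Lp.coeFn_fun_finsetSum F fun i => (hf i).toLp (f i),
    (eventually_all_finset F).2 fun i _ => (hf i).coeFn_toLp] with x hsub hsum hf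
  rw [hsub, Pi.sub_apply, hsum]
  exact congrArg (· - S x) (Finset.sum_congr rfl hf)

theorem MeasureTheory.MemLp.toReal_eLpNorm_smul_le {α 𝕜 E : Type*} [MeasurableSpace α]
    {μ : Measure α} [NormedRing 𝕜] [NormedAddCommGroup E] [MulActionWithZero 𝕜 E]
    [IsBoundedSMul 𝕜 E] {p : ℝ≥0∞} {φ : α → 𝕜} {f : α → E} (hφ : MemLp φ ⊤ μ)
    (hf : MemLp f p μ) :
    (eLpNorm (φ • f) p μ).toReal ≤ (eLpNorm φ ⊤ μ).toReal * (eLpNorm f p μ).toReal := by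
  rw [← ENNReal.toReal_mul]
  exact ENNReal.toReal_mono (ENNReal.mul_ne_top hφ.eLpNorm_ne_top hf.eLpNorm_ne_top)
    (eLpNorm_smul_le_eLpNorm_top_mul_eLpNorm p hf.1 φ)

theorem MeasureTheory.exists_hasSum_toLp_smul_and_weighted_tsum_sq_le {α 𝕜 E G : Type*}
    [MeasurableSpace α] {μ : Measure α} [NormedRing 𝕜] [NormedAddCommGroup E]
    [MulActionWithZero 𝕜 E] [IsBoundedSMul 𝕜 E] [CompleteSpace E] {p : ℝ≥0∞} [Fact (1 ≤ p)]
    [AddGroup G] {w : G → ℝ} (hw : ∀ n, 0 < w n) (hw_add : ∀ j k, w (j + k) ≤ w j * w k)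
    {Ω : G → α → 𝕜} {y : G → α → E} (hΩ : ∀ j, MemLp (Ω j) ⊤ μ) (hy : ∀ n, MemLp (y n) p μ)
    (hwΩ : Summable fun j => w j * (eLpNorm (Ω j) ⊤ μ).toReal)
    (hwy : Summable fun n => (w n * (eLpNorm (y n) p μ).toReal) ^ 2) :
    ∃ S : G → Lp E p μ,
      (∀ n, HasSum (fun j => ((hy (n - j)).smul (hΩ j)).toLp (Ω j • y (n - j))) (S n)) ∧
      Summable (fun n => (w n * ‖S n‖) ^ 2) ∧
      ∑' n, (w n * ‖S n‖) ^ 2 ≤ (∑' j, w j * (eLpNorm (Ω j) ⊤ μ).toReal) ^ 2 *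
        ∑' n, (w n * (eLpNorm (y n) p μ).toReal) ^ 2 := by
  obtain ⟨hKN, hsum, hle⟩ := summable_weighted_tsum_mul_sub_and_tsum_sq_le hw hw_add
    (fun _ => ENNReal.toReal_nonneg) (fun _ => ENNReal.toReal_nonneg) hwΩ hwy
  set g : G → G → Lp E p μ := fun n j => ((hy (n - j)).smul (hΩ j)).toLp (Ω j • y (n - j))
  have hg (n j : G) :
      ‖g n j‖ ≤ (eLpNorm (Ω j) ⊤ μ).toReal * (eLpNorm (y (n - j)) p μ).toReal := by
    rw [Lp.norm_toLp]
    exact (hΩ j).toReal_eLpNorm_smul_le (hy (n - j))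
  have hS (n : G) : (w n * ‖∑' j, g n j‖) ^ 2 ≤
      (w n * ∑' j, (eLpNorm (Ω j) ⊤ μ).toReal * (eLpNorm (y (n - j)) p μ).toReal) ^ 2 := by
    have hwn : 0 ≤ w n := (hw n).le
    gcongr
    exact tsum_of_norm_bounded (hKN n).hasSum (hg n)
  have hS_sum := hsum.of_nonneg_of_le (fun n => sq_nonneg _) hS
  exact ⟨fun n => ∑' j, g n j, fun n => (Summable.of_norm_bounded (hKN n) (hg n)).hasSum,
    hS_sum, (hS_sum.tsum_le_tsum hS hsum).trans hle⟩

theorem stmt_1_general (a : ℝ) (Ω : ℤ → EuclideanSpace ℝ (Fin 3) → ℂ)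
    (hΩmem : ∀ j : ℤ, MemLp (Ω j) ⊤ (ballMeasure a))
    (hΩsum : Summable fun j : ℤ => (1 + |j| : ℝ) * (eLpNorm (Ω j) ⊤ (ballMeasure a)).toReal) :
    ∃ C : ℝ, 0 ≤ C ∧
      C = (∑' j : ℤ, (1 + |j| : ℝ) ^ ((2 : ℝ) / 3) * (eLpNorm (Ω j) ⊤ (ballMeasure a)).toReal) ^ 2 ∧
      ∀ y : ℤ → EuclideanSpace ℝ (Fin 3) → ℂ,
        (∀ n : ℤ, MemLp (y n) 2 (ballMeasure a)) →
        (Summable fun n : ℤ =>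
          (1 + |n| : ℝ) ^ ((4 : ℝ) / 3) * (eLpNorm (y n) 2 (ballMeasure a)).toReal ^ 2) →
        ∃ S : ℤ → EuclideanSpace ℝ (Fin 3) → ℂ,
          (∀ n : ℤ, MemLp (S n) 2 (ballMeasure a) ∧
            Filter.Tendsto
              (fun F : Finset ℤ =>
                (eLpNorm (fun x => (∑ j ∈ F, Ω j x * y (n - j) x) - S n x) 2
                  (ballMeasure a)).toReal)
              Filter.atTop (nhds 0)) ∧
          (Summable fun n : ℤ =>
            (1 + |n| : ℝ) ^ ((4 : ℝ) / 3) * (eLpNorm (S n) 2 (ballMeasure a)).toReal ^ 2) ∧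
          (∑' n : ℤ, (1 + |n| : ℝ) ^ ((4 : ℝ) / 3) * (eLpNorm (S n) 2 (ballMeasure a)).toReal ^ 2) ≤
            C * ∑' n : ℤ,
              (1 + |n| : ℝ) ^ ((4 : ℝ) / 3) * (eLpNorm (y n) 2 (ballMeasure a)).toReal ^ 2 := by
  set μ := ballMeasure a
  set w : ℤ → ℝ := fun n => (1 + |n| : ℝ) ^ ((2 : ℝ) / 3)
  have hw_sq (n : ℤ) : (1 + |n| : ℝ) ^ ((4 : ℝ) / 3) = w n ^ 2 := by
    rw [← Real.rpow_natCast, ← Real.rpow_mul (by positivity)]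
    norm_num
  have hwΩ : Summable fun j => w j * (eLpNorm (Ω j) ⊤ μ).toReal :=
    hΩsum.of_nonneg_of_le (fun j => by positivity) fun j =>
      mul_le_mul_of_nonneg_right (Real.rpow_le_self_of_one_le (by simp) (by norm_num))
        ENNReal.toReal_nonneg
  refine ⟨_, sq_nonneg _, rfl, fun y hy hysum => ?_⟩
  simp only [hw_sq, ← mul_pow] at hysum ⊢
  obtain ⟨S, hS, hsum, hle⟩ := exists_hasSum_toLp_smul_and_weighted_tsum_sq_le
    (fun n => by positivity) (one_add_abs_rpow_add_le (by norm_num)) hΩmem hy hwΩ hysum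
  refine ⟨fun n => S n, fun n => ⟨Lp.memLp _,
    tendsto_eLpNorm_sum_sub_of_hasSum_toLp _ (hS n)⟩, ?_⟩
  simpa only [← Lp.norm_def] using And.intro hsum hle

/-- Lemma 12: boundedness of the convolution-type operator `𝔖` on the weighted sequence
space `ℋ`: if `Σ_j (1+|j|)‖Ω_j‖_∞ < ∞` then, with
`C = (Σ_j (1+|j|)^{2/3}‖Ω_j‖_∞)²`, for every `(y_n)` with
`Σ_n (1+|n|)^{4/3}‖y_n‖₂² < ∞` the series `Σ_j Ω_j · y_{n-j}` converges in `L²(B)` to some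
`S n`, and `Σ_n (1+|n|)^{4/3}‖S n‖₂² ≤ C Σ_n (1+|n|)^{4/3}‖y_n‖₂²`. -/
theorem stmt_1 (a : ℝ) (ha : 0 < a) (Ω : ℤ → EuclideanSpace ℝ (Fin 3) → ℂ)
    (hΩmem : ∀ j : ℤ, MemLp (Ω j) ⊤ (ballMeasure a))
    (hΩsum : Summable fun j : ℤ => (1 + |j| : ℝ) * (eLpNorm (Ω j) ⊤ (ballMeasure a)).toReal) :
    ∃ C : ℝ, 0 ≤ C ∧
      C = (∑' j : ℤ, (1 + |j| : ℝ) ^ ((2 : ℝ) / 3) * (eLpNorm (Ω j) ⊤ (ballMeasure a)).toReal) ^ 2 ∧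
      ∀ y : ℤ → EuclideanSpace ℝ (Fin 3) → ℂ,
        (∀ n : ℤ, MemLp (y n) 2 (ballMeasure a)) →
        (Summable fun n : ℤ =>
          (1 + |n| : ℝ) ^ ((4 : ℝ) / 3) * (eLpNorm (y n) 2 (ballMeasure a)).toReal ^ 2) →
        ∃ S : ℤ → EuclideanSpace ℝ (Fin 3) → ℂ,
          (∀ n : ℤ, MemLp (S n) 2 (ballMeasure a) ∧
            Filter.Tendsto
              (fun F : Finset ℤ =>
                (eLpNorm (fun x => (∑ j ∈ F, Ω j x * y (n - j) x) - S n x) 2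
                  (ballMeasure a)).toReal)
              Filter.atTop (nhds 0)) ∧
          (Summable fun n : ℤ =>
            (1 + |n| : ℝ) ^ ((4 : ℝ) / 3) * (eLpNorm (S n) 2 (ballMeasure a)).toReal ^ 2) ∧
          (∑' n : ℤ, (1 + |n| : ℝ) ^ ((4 : ℝ) / 3) * (eLpNorm (S n) 2 (ballMeasure a)).toReal ^ 2) ≤
            C * ∑' n : ℤ,
              (1 + |n| : ℝ) ^ ((4 : ℝ) / 3) * (eLpNorm (y n) 2 (ballMeasure a)).toReal ^ 2 :=
  stmt_1_general a Ω hΩmem hΩsum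
end

section
/- Let A : ℝ → ℂ and, for each k ∈ ℕ, q_k : ℝ → ℂ be infinitely differentiable functions, and let (g_k)_{k∈ℕ} be infinitely differentiable functions g_k : ℝ → ℂ such that for every integer k ≥ 1 and every s ∈ ℝ: g_k''(s) + A(s)·g_k'(s) + q_k(s)·g_k(s) = i·(g_{k−1}(s) − g_{k+1}(s)). Assume g₀(0) = 1 and g_k(0) = g_k'(0) = 0 for every k ≥ 1. Then for every k ∈ ℕ and every integer j with 0 ≤ j ≤ 2k, the j-th derivative of g_k at 0 equals i^k if j = 2k, and equals 0 if j < 2k. -/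
open Complex

private abbrev SmInf (f : ℝ → ℂ) : Prop := ContDiff ℝ ((⊤ : ℕ∞) : WithTop ℕ∞) f

private lemma smInf_of_top {f : ℝ → ℂ} (hf : ContDiff ℝ (⊤ : ℕ∞) f) : SmInf f := hf.of_le (by simp)

private lemma smInf_nat {f : ℝ → ℂ} (n : ℕ) (hf : SmInf f) : ContDiff ℝ n f :=
  hf.of_le (by exact_mod_cast le_top)

private lemma smooth_deriv {f : ℝ → ℂ} (hf : SmInf f) : SmInf (deriv f) :=
  (contDiff_infty_iff_deriv.mp hf).2

private lemma itd_add {f g : ℝ → ℂ} (n : ℕ) (hf : SmInf f) (hg : SmInf g) (x : ℝ) :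
    iteratedDeriv n (fun s => f s + g s) x = iteratedDeriv n f x + iteratedDeriv n g x := by
  rw [← iteratedDerivWithin_univ, ← iteratedDerivWithin_univ, ← iteratedDerivWithin_univ]
  exact iteratedDerivWithin_add (Set.mem_univ x) uniqueDiffOn_univ
    ((smInf_nat n hf).contDiffAt.contDiffWithinAt) ((smInf_nat n hg).contDiffAt.contDiffWithinAt)

private lemma itd_neg (f : ℝ → ℂ) (n : ℕ) (x : ℝ) :
    iteratedDeriv n (fun s => -f s) x = -iteratedDeriv n f x :=
  iteratedDeriv_neg n f x

private lemma itd_const_mul {f : ℝ → ℂ} (c : ℂ) (n : ℕ) (hf : SmInf f) (x : ℝ) :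
    iteratedDeriv n (fun s => c * f s) x = c * iteratedDeriv n f x := by
  rw [← iteratedDerivWithin_univ, ← iteratedDerivWithin_univ]
  have := iteratedDerivWithin_const_smul (F := ℂ) (s := Set.univ) (Set.mem_univ x)
    uniqueDiffOn_univ c ((smInf_nat n hf).contDiffAt.contDiffWithinAt)
  simpa [Pi.smul_def, smul_eq_mul] using this

/-- If all derivatives of `f` up to order `m` vanish at `0`, then the `m`-th derivative of
`h * f` vanishes at `0`. -/
private lemma itd_mul_zero : ∀ (m : ℕ) (f h : ℝ → ℂ), SmInf f → SmInf h →
    (∀ i, i ≤ m → iteratedDeriv i f 0 = 0) →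
    iteratedDeriv m (fun s => h s * f s) 0 = 0 := by
  intro m
  induction m with
  | zero =>
    intro f h _ _ hz
    have := hz 0 le_rfl
    simp only [iteratedDeriv_zero] at this ⊢
    simp [this]
  | succ m IH =>
    intro f h hf hh hz
    have hdf : SmInf (deriv f) := smooth_deriv hf
    have hdh : SmInf (deriv h) := smooth_deriv hh
    have hdiff_f : Differentiable ℝ f := hf.differentiable (by simp)
    have hdiff_h : Differentiable ℝ h := hh.differentiable (by simp)
    have hder : deriv (fun s => h s * f s) =
        fun s => deriv h s * f s + h s * deriv f s := by
      funext s
      exact deriv_mul (hdiff_h s) (hdiff_f s)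
    rw [iteratedDeriv_succ', hder,
      itd_add m (hdh.mul hf) (hh.mul hdf) 0,
      IH f (deriv h) hf hdh (fun i hi => hz i (hi.trans (Nat.le_succ m))),
      IH (deriv f) h hdf hh (fun i hi => by
        rw [← iteratedDeriv_succ']
        exact hz (i + 1) (Nat.succ_le_succ hi)),
      add_zero]

/-- Lemma 37 (case τ = 0): for a sequence of smooth functions solving
`g_k'' + A g_k' + q_k g_k = i (g_{k-1} - g_{k+1})` for `k ≥ 1` with `g₀(0) = 1` and
`g_k(0) = g_k'(0) = 0` for `k ≥ 1`, the `j`-th derivative of `g_k` at `0` is `i^k δ_{j,2k}`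
for `0 ≤ j ≤ 2k`. -/
theorem stmt_5 (A : ℝ → ℂ) (q : ℕ → ℝ → ℂ) (g : ℕ → ℝ → ℂ)
    (hA : ContDiff ℝ (⊤ : ℕ∞) A) (hq : ∀ k, ContDiff ℝ (⊤ : ℕ∞) (q k)) (hg : ∀ k, ContDiff ℝ (⊤ : ℕ∞) (g k))
    (hode : ∀ k : ℕ, 1 ≤ k → ∀ s : ℝ,
      deriv (deriv (g k)) s + A s * deriv (g k) s + q k s * g k s =
        Complex.I * (g (k - 1) s - g (k + 1) s))
    (h0 : g 0 0 = 1)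
    (h1 : ∀ k : ℕ, 1 ≤ k → g k 0 = 0 ∧ deriv (g k) 0 = 0) :
    ∀ k : ℕ, ∀ j : ℕ, j ≤ 2 * k →
      iteratedDeriv j (g k) 0 = if j = 2 * k then Complex.I ^ k else 0 := by
  have hA' : SmInf A := smInf_of_top hA
  have hq' : ∀ k, SmInf (q k) := fun k => smInf_of_top (hq k)
  have hg' : ∀ k, SmInf (g k) := fun k => smInf_of_top (hg k)
  have key : ∀ j : ℕ, ∀ k : ℕ, j ≤ 2 * k →
      iteratedDeriv j (g k) 0 = if j = 2 * k then Complex.I ^ k else 0 := by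
    intro j
    induction j using Nat.strong_induction_on with
    | _ j IH =>
      match j with
      | 0 =>
        intro k _
        rcases Nat.eq_zero_or_pos k with rfl | hk
        · simp [iteratedDeriv_zero, h0]
        · rw [iteratedDeriv_zero, (h1 k hk).1, if_neg (by omega)]
      | 1 =>
        intro k hjk
        have hk : 1 ≤ k := by omega
        rw [iteratedDeriv_one, (h1 k hk).2, if_neg (by omega)]
      | (m + 2) =>
        intro k hjk
        have hk : 1 ≤ k := by omega
        have hdg : SmInf (deriv (g k)) := smooth_deriv (hg' k)
        have hddg : deriv (deriv (g k)) =
            fun s => Complex.I * (g (k - 1) s - g (k + 1) s) +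
              (-(A s * deriv (g k) s) + -(q k s * g k s)) := by
          funext s
          have := hode k hk s
          linear_combination this
        have hsub : SmInf (fun s => g (k - 1) s - g (k + 1) s) :=
          (hg' (k - 1)).sub (hg' (k + 1))
        have hterm1 : SmInf (fun s => Complex.I * (g (k - 1) s - g (k + 1) s)) :=
          contDiff_const.mul hsub
        have hterm2 : SmInf (fun s => -(A s * deriv (g k) s)) := (hA'.mul hdg).neg
        have hterm3 : SmInf (fun s => -(q k s * g k s)) := ((hq' k).mul (hg' k)).neg
        rw [show m + 2 = m + 1 + 1 from rfl, iteratedDeriv_succ', iteratedDeriv_succ', hddg]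
        rw [itd_add m hterm1 (hterm2.add hterm3) 0, itd_add m hterm2 hterm3 0]
        have hz2 : iteratedDeriv m (fun s => A s * deriv (g k) s) 0 = 0 := by
          apply itd_mul_zero m (deriv (g k)) A hdg hA'
          intro i hi
          rw [← iteratedDeriv_succ', IH (i + 1) (by omega) k (by omega), if_neg (by omega)]
        have hz3 : iteratedDeriv m (fun s => q k s * g k s) 0 = 0 := by
          apply itd_mul_zero m (g k) (q k) (hg' k) (hq' k)
          intro i hi
          rw [IH i (by omega) k (by omega), if_neg (by omega)]
        rw [itd_neg (fun s => A s * deriv (g k) s) m 0,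
          itd_neg (fun s => q k s * g k s) m 0, hz2, hz3]
        rw [itd_const_mul Complex.I m hsub 0]
        have hsplit : iteratedDeriv m (fun s => g (k - 1) s - g (k + 1) s) 0 =
            iteratedDeriv m (g (k - 1)) 0 - iteratedDeriv m (g (k + 1)) 0 := by
          have h' := itd_add m (f := g (k - 1)) (g := fun s => -(g (k + 1) s))
            (hg' (k - 1)) ((hg' (k + 1)).neg) 0
          simp only [sub_eq_add_neg]
          rw [h', itd_neg (g (k + 1)) m 0]
        rw [hsplit]
        have hkp1 : iteratedDeriv m (g (k + 1)) 0 = 0 := by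
          rw [IH m (by omega) (k + 1) (by omega), if_neg (by omega)]
        have hkm1 : iteratedDeriv m (g (k - 1)) 0 =
            if m = 2 * (k - 1) then Complex.I ^ (k - 1) else 0 :=
          IH m (by omega) (k - 1) (by omega)
        rw [hkp1, hkm1]
        obtain ⟨k', rfl⟩ : ∃ k', k = k' + 1 := ⟨k - 1, by omega⟩
        simp only [Nat.add_sub_cancel]
        by_cases hm : m = 2 * k'
        · rw [if_pos hm, if_pos (by omega)]
          ring
        · rw [if_neg hm, if_neg (by omega)]
          ring
  exact fun k j hjk => key j k hjk
end

section
/- Let l ∈ ℕ and let f : (0,∞) → ℝ be twice differentiable with f''(ζ) = (1 + l(l+1)/ζ²)·f(ζ) for all ζ > 0, and suppose e^ζ·f(ζ) → 1 as ζ → ∞. Define 𝒢₀(ζ,η) = (η^{l+1}·ζ^{−l} − ζ^{l+1}·η^{−l})/(2l+1) and its ζ-derivative ∂_ζ𝒢₀(ζ,η) = (−l·η^{l+1}·ζ^{−l−1} − (l+1)·ζ^{l}·η^{−l})/(2l+1). Then for every ζ > 0 the following integrals converge and ∫_ζ^∞ 𝒢₀(ζ,η)·f(η) dη = f(ζ)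 and ∫_ζ^∞ ∂_ζ𝒢₀(ζ,η)·f(η) dη = f'(ζ). -/
/-!
For a solution `g` of the Euler equation `g'' = l(l+1) x⁻² g`, the Wronskian-type expression
`g f' - g' f` has derivative `g f`, because `f'' = (1 + l(l+1) x⁻²) f`. The hypothesis
`eˣ f(x) → 1` makes `f`, hence `f''`, of size `O(e⁻ˣ)`; as `f'` has a limit which must be `0`,
`f' = -∫ₓ^∞ f''` is `O(e⁻ˣ)` as well. Since `g` grows only polynomially, integrating over `(ζ, ∞)`
gives `∫_ζ^∞ g f = g'(ζ) f(ζ) - g(ζ) f'(ζ)`. The kernel `𝒢₀(ζ, ·)` is the solution with Cauchy data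
`(g, g') = (0, 1)` at `ζ`, and `∂_ζ𝒢₀(ζ, ·)` the one with data `(-1, 0)`.
-/

open MeasureTheory Real Set Filter Asymptotics Topology

theorem eq_zero_of_tendsto_of_tendsto_deriv {f f' : ℝ → ℝ} {a c L : ℝ}
    (hf : ∀ x ∈ Ioi a, HasDerivAt f (f' x) x) (hfc : Tendsto f atTop (𝓝 c))
    (hf'L : Tendsto f' atTop (𝓝 L)) : L = 0 := by
  set y : ℝ → ℝ := fun x => max a x + 1
  have hy : Tendsto y atTop atTop :=
    tendsto_atTop_add_const_right _ _ (tendsto_atTop_mono (le_max_right a) tendsto_id)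
  have hslope : ∀ x, ∃ ξ ∈ Ioo (y x) (y x + 1), f' ξ = f (y x + 1) - f (y x) := by
    intro x
    have hsub : Icc (y x) (y x + 1) ⊆ Ioi a := fun t ht =>
      (le_max_left a x).trans_lt ((lt_add_one _).trans_le ht.1)
    obtain ⟨ξ, hξ, hξf⟩ := exists_hasDerivAt_eq_slope f f' (lt_add_one (y x))
      (fun t ht => (hf t (hsub ht)).continuousAt.continuousWithinAt)
      (fun t ht => hf t (hsub (Ioo_subset_Icc_self ht)))
    exact ⟨ξ, hξ, by rw [hξf, add_sub_cancel_left, div_one]⟩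
  choose ξ hξ hξf using hslope
  have hξ_top : Tendsto ξ atTop atTop := tendsto_atTop_mono (fun x => (hξ x).1.le) hy
  have hdiff : Tendsto (fun x => f (y x + 1) - f (y x)) atTop (𝓝 (c - c)) :=
    (hfc.comp (tendsto_atTop_add_const_right _ _ hy)).sub (hfc.comp hy)
  rw [sub_self] at hdiff
  exact tendsto_nhds_unique (hf'L.comp hξ_top) (hdiff.congr fun x => (hξf x).symm)

theorem isBigO_exp_neg_of_tendsto_exp_mul {f : ℝ → ℝ} {c : ℝ}
    (h : Tendsto (fun x => exp x * f x) atTop (𝓝 c)) : f =O[atTop] fun x => exp (-x) := by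
  have := (isBigO_refl (fun x => exp (-x)) atTop).mul (h.isBigO_one ℝ)
  simpa [← mul_assoc, ← exp_add] using this

theorem isBigO_exp_neg_of_hasDerivAt_isBigO_exp_neg {f f' f'' : ℝ → ℝ} {a c : ℝ}
    (hf : ∀ x ∈ Ioi a, HasDerivAt f (f' x) x) (hf' : ∀ x ∈ Ioi a, HasDerivAt f' (f'' x) x)
    (hcont : ContinuousOn f'' (Ioi a)) (hfc : Tendsto f atTop (𝓝 c))
    (hf''O : f'' =O[atTop] fun x => exp (-x)) : f' =O[atTop] fun x => exp (-x) := by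
  have hint : ∀ x ∈ Ioi a, IntegrableOn f'' (Ioi x) := fun x hx =>
    integrable_of_isBigO_exp_neg one_pos (hcont.mono (Ici_subset_Ioi.2 hx))
      (by simpa using hf''O)
  have hf'lim := tendsto_limUnder_of_hasDerivAt_of_integrableOn_Ioi
    (fun x hx => hf' x (lt_add_one a |>.trans hx)) (hint _ (lt_add_one a))
  rw [eq_zero_of_tendsto_of_tendsto_deriv hf hfc hf'lim] at hf'lim
  obtain ⟨C, hC⟩ := hf''O.bound
  obtain ⟨N, hN⟩ := eventually_atTop.1 hC
  refine IsBigO.of_bound C ?_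
  filter_upwards [eventually_gt_atTop a, eventually_ge_atTop N] with x hxa hxN
  have htail : ∫ t in Ioi x, f'' t = 0 - f' x :=
    integral_Ioi_of_hasDerivAt_of_tendsto' (fun t ht => hf' t (hxa.trans_le ht))
      (hint x hxa) hf'lim
  calc ‖f' x‖ = ‖∫ t in Ioi x, f'' t‖ := by rw [htail, zero_sub, norm_neg]
    _ ≤ ∫ t in Ioi x, C * exp (-t) :=
      norm_integral_le_of_norm_le ((integrableOn_exp_neg_Ioi x).const_mul C)
        ((ae_restrict_iff' measurableSet_Ioi).2 (Eventually.of_forall fun t ht => by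
          simpa using hN t (hxN.trans ht.le)))
    _ = C * ‖exp (-x)‖ := by
      rw [integral_const_mul, integral_exp_neg_Ioi, norm_of_nonneg (exp_pos _).le]

theorem zpow_isBigO_exp_half (k : ℤ) : (fun x : ℝ => x ^ k) =O[atTop] fun x => exp (x / 2) := by
  simpa only [div_eq_inv_mul, mul_one] using
    (isLittleO_zpow_exp_pos_mul_atTop k (one_half_pos (α := ℝ))).isBigO

theorem Asymptotics.IsBigO.mul_exp_half_exp_neg {u v : ℝ → ℝ}
    (hu : u =O[atTop] fun x => exp (x / 2)) (hv : v =O[atTop] fun x => exp (-x)) :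
    (fun x => u x * v x) =O[atTop] fun x => exp (-(1 / 2) * x) := by
  refine (hu.mul hv).congr_right fun x => ?_
  rw [← exp_add]
  ring_nf

theorem integral_Ioi_mul_eq_wronskian {f f' f'' g g' g'' V : ℝ → ℝ} {ζ : ℝ}
    (hf : ∀ x ∈ Ici ζ, HasDerivAt f (f' x) x) (hf' : ∀ x ∈ Ici ζ, HasDerivAt f' (f'' x) x)
    (hg : ∀ x ∈ Ici ζ, HasDerivAt g (g' x) x) (hg' : ∀ x ∈ Ici ζ, HasDerivAt g' (g'' x) x)
    (hfode : ∀ x ∈ Ici ζ, f'' x = (1 + V x) * f x) (hgode : ∀ x ∈ Ici ζ, g'' x = V x * g x)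
    (hint : IntegrableOn (fun x => g x * f x) (Ioi ζ))
    (hW : Tendsto (fun x => g x * f' x - g' x * f x) atTop (𝓝 0)) :
    ∫ x in Ioi ζ, g x * f x = g' ζ * f ζ - g ζ * f' ζ := by
  have hWderiv : ∀ x ∈ Ici ζ,
      HasDerivAt (fun x => g x * f' x - g' x * f x) (g x * f x) x := fun x hx => by
    refine (((hg x hx).mul (hf' x hx)).sub ((hg' x hx).mul (hf x hx))).congr_deriv ?_
    rw [hfode x hx, hgode x hx]
    ring
  rw [integral_Ioi_of_hasDerivAt_of_tendsto' hWderiv hint hW]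
  ring

noncomputable def eulerSol (l : ℕ) (a b x : ℝ) : ℝ := a * x ^ ((l : ℤ) + 1) + b * x ^ (-(l : ℤ))

noncomputable def eulerSolDeriv (l : ℕ) (a b x : ℝ) : ℝ :=
  a * (l + 1) * x ^ (l : ℤ) - b * l * x ^ (-(l : ℤ) - 1)

section EulerSol

variable {l : ℕ} {a b x : ℝ}

theorem eulerSol_apply : eulerSol l a b x = a * x ^ (l + 1) + b / x ^ l := by
  rw [eulerSol, ← Nat.cast_succ, zpow_natCast, zpow_neg, zpow_natCast, div_eq_mul_inv]

theorem hasDerivAt_eulerSol (hx : x ≠ 0) :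
    HasDerivAt (eulerSol l a b) (eulerSolDeriv l a b x) x := by
  refine (((hasDerivAt_zpow ((l : ℤ) + 1) x (.inl hx)).const_mul a).add
    ((hasDerivAt_zpow (-(l : ℤ)) x (.inl hx)).const_mul b)).congr_deriv ?_
  simp only [eulerSolDeriv, add_sub_cancel_right]
  push_cast
  ring

theorem hasDerivAt_eulerSolDeriv (hx : x ≠ 0) :
    HasDerivAt (eulerSolDeriv l a b) (l * (l + 1) / x ^ 2 * eulerSol l a b x) x := by
  refine (((hasDerivAt_zpow (l : ℤ) x (.inl hx)).const_mul (a * (l + 1))).sub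
    ((hasDerivAt_zpow (-(l : ℤ) - 1) x (.inl hx)).const_mul (b * l))).congr_deriv ?_
  simp only [eulerSol, zpow_sub₀ hx, zpow_add₀ hx, zpow_neg, zpow_one]
  push_cast
  field_simp
  ring

theorem eulerSol_isBigO : eulerSol l a b =O[atTop] fun x => exp (x / 2) :=
  ((zpow_isBigO_exp_half _).const_mul_left a).add ((zpow_isBigO_exp_half _).const_mul_left b)

theorem eulerSolDeriv_isBigO : eulerSolDeriv l a b =O[atTop] fun x => exp (x / 2) :=
  ((zpow_isBigO_exp_half _).const_mul_left _).sub ((zpow_isBigO_exp_half _).const_mul_left _)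

end EulerSol

theorem isBigO_exp_neg_of_ode {l : ℕ} {f f' f'' : ℝ → ℝ}
    (hf : ∀ x ∈ Ioi (0 : ℝ), HasDerivAt f (f' x) x)
    (hf' : ∀ x ∈ Ioi (0 : ℝ), HasDerivAt f' (f'' x) x)
    (hode : ∀ x ∈ Ioi (0 : ℝ), f'' x = (1 + (l * (l + 1) : ℝ) / x ^ 2) * f x) {c : ℝ}
    (hlim : Tendsto (fun x => exp x * f x) atTop (𝓝 c)) :
    (f =O[atTop] fun x => exp (-x)) ∧ f' =O[atTop] fun x => exp (-x) := by
  have hfO := isBigO_exp_neg_of_tendsto_exp_mul hlim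
  have hcoef : Tendsto (fun x : ℝ => 1 + (l * (l + 1) : ℝ) / x ^ 2) atTop (𝓝 (1 + 0)) :=
    tendsto_const_nhds.add (tendsto_const_nhds.div_atTop (tendsto_pow_atTop two_ne_zero))
  have hf''O : f'' =O[atTop] fun x => exp (-x) :=
    ((hcoef.isBigO_one ℝ).mul hfO).congr'
      (eventually_gt_atTop 0 |>.mono fun x hx => (hode x hx).symm) (by simp)
  have hf''cont : ContinuousOn f'' (Ioi 0) :=
    ((continuousOn_const.add (continuousOn_const.div (continuousOn_pow 2)
      fun x hx => pow_ne_zero 2 (ne_of_gt hx))).mul (HasDerivAt.continuousOn hf)).congr hode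
  have hf'O := isBigO_exp_neg_of_hasDerivAt_isBigO_exp_neg hf hf' hf''cont
    (hfO.trans_tendsto tendsto_exp_neg_atTop_nhds_zero) hf''O
  exact ⟨hfO, hf'O⟩

theorem integral_Ioi_eulerSol_mul {l : ℕ} {f f' f'' : ℝ → ℝ}
    (hf : ∀ x ∈ Ioi (0 : ℝ), HasDerivAt f (f' x) x)
    (hf' : ∀ x ∈ Ioi (0 : ℝ), HasDerivAt f' (f'' x) x)
    (hode : ∀ x ∈ Ioi (0 : ℝ), f'' x = (1 + (l * (l + 1) : ℝ) / x ^ 2) * f x)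
    (hfO : f =O[atTop] fun x => exp (-x)) (hf'O : f' =O[atTop] fun x => exp (-x))
    {ζ : ℝ} (hζ : 0 < ζ) (a b : ℝ) :
    IntegrableOn (fun x => eulerSol l a b x * f x) (Ioi ζ) ∧
      ∫ x in Ioi ζ, eulerSol l a b x * f x =
        eulerSolDeriv l a b ζ * f ζ - eulerSol l a b ζ * f' ζ := by
  have hpos : Ici ζ ⊆ Ioi 0 := Ici_subset_Ioi.2 hζ
  have hg : ∀ x ∈ Ici ζ, HasDerivAt (eulerSol l a b) (eulerSolDeriv l a b x) x :=
    fun x hx => hasDerivAt_eulerSol (hpos hx).ne'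
  have hint : IntegrableOn (fun x => eulerSol l a b x * f x) (Ioi ζ) :=
    integrable_of_isBigO_exp_neg one_half_pos
      ((HasDerivAt.continuousOn hg).mul (HasDerivAt.continuousOn hf |>.mono hpos))
      (eulerSol_isBigO.mul_exp_half_exp_neg hfO)
  have hW : Tendsto (fun x => eulerSol l a b x * f' x - eulerSolDeriv l a b x * f x) atTop
      (𝓝 0) :=
    ((eulerSol_isBigO.mul_exp_half_exp_neg hf'O).sub
      (eulerSolDeriv_isBigO.mul_exp_half_exp_neg hfO)).trans_tendsto
      (tendsto_exp_atBot.comp (tendsto_id.const_mul_atTop_of_neg (by norm_num)))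
  exact ⟨hint, integral_Ioi_mul_eq_wronskian (fun x hx => hf x (hpos hx))
    (fun x hx => hf' x (hpos hx)) hg (fun x hx => hasDerivAt_eulerSolDeriv (hpos hx).ne')
    (fun x hx => hode x (hpos hx)) (fun _ _ => rfl) hint hW⟩

/-- Lemma 46 reformulated: if `f'' = (1 + l(l+1)/ζ²) f` on `(0,∞)` and `e^ζ f(ζ) → 1` at
infinity, then for every `ζ > 0` the Green's-function integrals
`∫_ζ^∞ 𝒢₀(ζ,η) f(η) dη = f(ζ)` and `∫_ζ^∞ ∂_ζ𝒢₀(ζ,η) f(η) dη = f'(ζ)`, where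
`𝒢₀(ζ,η) = (η^{l+1} ζ^{-l} - ζ^{l+1} η^{-l})/(2l+1)`. -/
theorem stmt_6 (l : ℕ) (f f' f'' : ℝ → ℝ)
    (hf : ∀ ζ ∈ Set.Ioi (0 : ℝ), HasDerivAt f (f' ζ) ζ)
    (hf' : ∀ ζ ∈ Set.Ioi (0 : ℝ), HasDerivAt f' (f'' ζ) ζ)
    (hode : ∀ ζ ∈ Set.Ioi (0 : ℝ), f'' ζ = (1 + (l * (l + 1) : ℝ) / ζ ^ 2) * f ζ)
    (hlim : Filter.Tendsto (fun ζ : ℝ => Real.exp ζ * f ζ) Filter.atTop (nhds 1)) :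
    ∀ ζ ∈ Set.Ioi (0 : ℝ),
      (IntegrableOn
        (fun η : ℝ => (η ^ (l + 1) / ζ ^ l - ζ ^ (l + 1) / η ^ l) / (2 * (l : ℝ) + 1) * f η)
        (Set.Ioi ζ) volume ∧
       ∫ η in Set.Ioi ζ,
          (η ^ (l + 1) / ζ ^ l - ζ ^ (l + 1) / η ^ l) / (2 * (l : ℝ) + 1) * f η = f ζ) ∧
      (IntegrableOn
        (fun η : ℝ =>
          (-(l : ℝ) * η ^ (l + 1) / ζ ^ (l + 1) - ((l : ℝ) + 1) * ζ ^ l / η ^ l) /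
            (2 * (l : ℝ) + 1) * f η)
        (Set.Ioi ζ) volume ∧
       ∫ η in Set.Ioi ζ,
          (-(l : ℝ) * η ^ (l + 1) / ζ ^ (l + 1) - ((l : ℝ) + 1) * ζ ^ l / η ^ l) /
            (2 * (l : ℝ) + 1) * f η = f' ζ) := by
  obtain ⟨hfO, hf'O⟩ := isBigO_exp_neg_of_ode hf hf' hode hlim
  intro ζ hζ
  have hζ0 : ζ ≠ 0 := ne_of_gt hζ
  obtain ⟨hint₁, hval₁⟩ := integral_Ioi_eulerSol_mul hf hf' hode hfO hf'O hζ
    (1 / ζ ^ l / (2 * l + 1)) (-ζ ^ (l + 1) / (2 * l + 1))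
  obtain ⟨hint₂, hval₂⟩ := integral_Ioi_eulerSol_mul hf hf' hode hfO hf'O hζ
    (-l / ζ ^ (l + 1) / (2 * l + 1)) (-(l + 1) * ζ ^ l / (2 * l + 1))
  simp only [eulerSol_apply] at hint₁ hval₁ hint₂ hval₂
  refine ⟨⟨?_, ?_⟩, ?_, ?_⟩
  · convert hint₁ using 3 with η
    ring
  · convert hval₁ using 1
    · congr 1 with η
      ring
    · simp only [eulerSolDeriv, zpow_neg, zpow_sub₀ hζ0, zpow_natCast, zpow_one]
      field_simp
      ring
  · convert hint₂ using 3 with η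
    ring
  · convert hval₂ using 1
    · congr 1 with η
      ring
    · simp only [eulerSolDeriv, zpow_neg, zpow_sub₀ hζ0, zpow_natCast, zpow_one]
      field_simp
      ring
end

section
/- Let ω > 0, b ∈ ℝ, l ∈ ℕ, p₁ ∈ ℂ, and let Ω : (0,1] → ℝ be continuous and bounded. Let (g_n)_{n∈ℤ} be twice continuously differentiable functions g_n : (0,1] → ℂ satisfying, for every n ∈ ℤ and every r ∈ (0,1]: g_n''(r) = (−b/r + n·ω − i·p₁ + l(l+1)/r²)·g_n(r) + i·Ω(r)·(g_{n+1}(r) − g_{n−1}(r)). Assume sup_{n≥0} sup_{r∈(0,1]} e^{r·√(nω)}·|g_n(r)| < ∞ and sup_{n<0} sup_{r∈(0,1]} |g_n(r)| < ∞. If g_n(1) = 0 and g_n'(1) = 0 (one-sided derivative at 1) for every n ∈ ℤ, then g_n(r) = 0 for every n ∈ ℤ and every r ∈ (0,1]. -/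
/-!
Fix `r₀ ∈ (0,1]` and choose `μₙ` with `μₙ² = nω` and `Re μₙ = √(nω)` (which is `0` for
`n < 0`). On `[r₀,1]` the potential and `Ω` are bounded, so `e^{t Re μₙ}‖gₙ'' - μₙ² gₙ‖` is at
most `M` times the weighted norms `e^{t Re μₘ}‖gₘ‖`, `|m - n| ≤ 1`: the weights of neighbours
differ by at most a factor `e^{√ω}`. Factoring `d²/dt² - μₙ²` as `(d/dt - μₙ)(d/dt + μₙ)` and
integrating each factor back from `t = 1`, where the Cauchy data vanish, turns a common weighted
bound `β` into `3M ∬ β`. Iterating from the a priori bound `C` gives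
`C (3M)^k (1-t)^{2k} / (2k)!`, which tends to `0`.
-/

open Set Filter Topology

theorem norm_le_of_norm_deriv_le_mul_pow {E : Type*} [NormedAddCommGroup E] [NormedSpace ℝ E]
    [CompleteSpace E] {φ φ' : ℝ → E} {r c B : ℝ} {k : ℕ} (hrc : r ≤ c)
    (hφ : ∀ t ∈ Icc r c, HasDerivWithinAt φ (φ' t) (Icc r c) t)
    (hφ' : ContinuousOn φ' (Icc r c)) (hφc : φ c = 0)
    (hbound : ∀ t ∈ Icc r c, ‖φ' t‖ ≤ B * (c - t) ^ k) :
    ‖φ r‖ ≤ B * (c - r) ^ (k + 1) / (k + 1) := by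
  have hftc : ∫ t in r..c, φ' t = φ c - φ r :=
    intervalIntegral.integral_eq_sub_of_hasDeriv_right_of_le hrc
      (fun t ht => (hφ t ht).continuousWithinAt)
      (fun t ht => ((hφ t (Ioo_subset_Icc_self ht)).hasDerivAt
        (Icc_mem_nhds ht.1 ht.2)).hasDerivWithinAt)
      (hφ'.intervalIntegrable_of_Icc hrc)
  have hint : ∫ t in r..c, B * (c - t) ^ k = B * (c - r) ^ (k + 1) / (k + 1) := by
    rw [intervalIntegral.integral_const_mul,
      intervalIntegral.integral_comp_sub_left (fun t => t ^ k), sub_self, integral_pow]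
    ring
  calc ‖φ r‖ = ‖∫ t in r..c, φ' t‖ := by rw [hftc, hφc, zero_sub, norm_neg]
    _ ≤ ∫ t in r..c, B * (c - t) ^ k :=
      intervalIntegral.norm_integral_le_of_norm_le hrc
        (MeasureTheory.ae_of_all _ fun t ht => hbound t (Ioc_subset_Icc_self ht))
        (by apply Continuous.intervalIntegrable; fun_prop)
    _ = B * (c - r) ^ (k + 1) / (k + 1) := hint

theorem Complex.norm_exp_mul_ofReal (z : ℂ) (t : ℝ) :
    ‖Complex.exp (z * t)‖ = Real.exp (z.re * t) := by
  rw [Complex.norm_exp, Complex.re_mul_ofReal]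

theorem hasDerivAt_cexp_mul_ofReal (z : ℂ) (t : ℝ) :
    HasDerivAt (fun s : ℝ => Complex.exp (z * s)) (Complex.exp (z * t) * z) t := by
  simpa using ((Complex.ofRealCLM.hasDerivAt (x := t)).const_mul z).cexp

theorem exp_mul_norm_le_of_hasDerivWithinAt_mul_add {φ ψ : ℝ → ℂ} {μ : ℂ} {a r c B : ℝ}
    {k : ℕ} (hrc : r ≤ c) (hμa : 0 ≤ μ.re + a)
    (hφ : ∀ t ∈ Icc r c, HasDerivWithinAt φ (μ * φ t + ψ t) (Icc r c) t)
    (hψ : ContinuousOn ψ (Icc r c)) (hφc : φ c = 0)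
    (hbound : ∀ t ∈ Icc r c, Real.exp (a * t) * ‖ψ t‖ ≤ B * (c - t) ^ k) :
    Real.exp (a * r) * ‖φ r‖ ≤ B * (c - r) ^ (k + 1) / (k + 1) := by
  set w : ℝ → ℂ := fun t => Complex.exp (-μ * t) * φ t
  have hw : ∀ t ∈ Icc r c,
      HasDerivWithinAt w (Complex.exp (-μ * t) * ψ t) (Icc r c) t := fun t ht =>
    ((hasDerivAt_cexp_mul_ofReal (-μ) t).hasDerivWithinAt.mul (hφ t ht)).congr_deriv (by ring)
  have hw_bound : ∀ t ∈ Icc r c, ‖Complex.exp (-μ * t) * ψ t‖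
      ≤ Real.exp (-(μ.re + a) * r) * B * (c - t) ^ k := by
    intro t ht
    calc ‖Complex.exp (-μ * t) * ψ t‖
        = Real.exp (-(μ.re + a) * t) * (Real.exp (a * t) * ‖ψ t‖) := by
          rw [norm_mul, Complex.norm_exp_mul_ofReal, ← mul_assoc, ← Real.exp_add, Complex.neg_re]
          ring_nf
      _ ≤ Real.exp (-(μ.re + a) * r) * (B * (c - t) ^ k) := by
          gcongr ?_ * ?_
          · exact Real.exp_le_exp.mpr (by nlinarith [ht.1])
          · exact hbound t ht
      _ = Real.exp (-(μ.re + a) * r) * B * (c - t) ^ k := by ring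
  have hwr := norm_le_of_norm_deriv_le_mul_pow hrc hw
    ((Complex.continuous_exp.comp (by fun_prop)).continuousOn.mul hψ) (by simp [w, hφc])
    hw_bound
  calc Real.exp (a * r) * ‖φ r‖ = Real.exp ((μ.re + a) * r) * ‖w r‖ := by
        rw [norm_mul, Complex.norm_exp_mul_ofReal, ← mul_assoc, ← Real.exp_add, Complex.neg_re]
        ring_nf
    _ ≤ Real.exp ((μ.re + a) * r)
          * (Real.exp (-(μ.re + a) * r) * B * (c - r) ^ (k + 1) / (k + 1)) := by
        gcongr
    _ = B * (c - r) ^ (k + 1) / (k + 1) := by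
        rw [neg_mul, Real.exp_neg]
        field_simp

theorem exp_mul_norm_le_of_deriv2_sub_sq_mul_le {f f' f'' : ℝ → ℂ} {μ : ℂ} {r c B : ℝ}
    {k : ℕ} (hrc : r ≤ c) (hμ : 0 ≤ μ.re)
    (hf : ∀ t ∈ Icc r c, HasDerivWithinAt f (f' t) (Icc r c) t)
    (hf' : ∀ t ∈ Icc r c, HasDerivWithinAt f' (f'' t) (Icc r c) t)
    (hf'' : ContinuousOn f'' (Icc r c)) (hfc : f c = 0) (hf'c : f' c = 0)
    (hbound : ∀ t ∈ Icc r c,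
      Real.exp (μ.re * t) * ‖f'' t - μ ^ 2 * f t‖ ≤ B * (c - t) ^ k) :
    Real.exp (μ.re * r) * ‖f r‖ ≤ B * (c - r) ^ (k + 2) / ((k + 1) * (k + 2)) := by
  -- factor `d²/dt² - μ²` as `(d/dt - μ) ∘ (d/dt + μ)` and integrate each factor back from `c`
  set u : ℝ → ℂ := fun t => f' t + μ * f t
  have hu : ∀ t ∈ Icc r c,
      HasDerivWithinAt u (μ * u t + (f'' t - μ ^ 2 * f t)) (Icc r c) t := fun t ht =>
    ((hf' t ht).add ((hf t ht).const_mul μ)).congr_deriv (by ring)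
  have hfu : ∀ t ∈ Icc r c, HasDerivWithinAt f (-μ * f t + u t) (Icc r c) t := fun t ht =>
    (hf t ht).congr_deriv (by ring)
  have hf_cont : ContinuousOn f (Icc r c) := fun t ht => (hf t ht).continuousWithinAt
  have hf'_cont : ContinuousOn f' (Icc r c) := fun t ht => (hf' t ht).continuousWithinAt
  have hu_bound : ∀ s ∈ Icc r c,
      Real.exp (μ.re * s) * ‖u s‖ ≤ B * (c - s) ^ (k + 1) / (k + 1) := by
    intro s hs
    have hsub : Icc s c ⊆ Icc r c := Icc_subset_Icc_left hs.1
    exact exp_mul_norm_le_of_hasDerivWithinAt_mul_add hs.2 (by linarith)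
      (fun t ht => (hu t (hsub ht)).mono hsub)
      ((hf''.sub (continuousOn_const.mul hf_cont)).mono hsub) (by simp [u, hfc, hf'c])
      (fun t ht => hbound t (hsub ht))
  have hf_bound := exp_mul_norm_le_of_hasDerivWithinAt_mul_add (μ := -μ) (B := B / (k + 1))
    (k := k + 1) hrc (by simp) hfu (hf'_cont.add (continuousOn_const.mul hf_cont)) hfc
    (fun t ht => (hu_bound t ht).trans_eq (by ring))
  refine hf_bound.trans_eq ?_
  push_cast
  field_simp
  ring

open Nat in
theorem tendsto_pow_two_mul_div_factorial (x : ℝ) :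
    Tendsto (fun k : ℕ => x ^ (2 * k) / (2 * k)!) atTop (𝓝 0) :=
  (FloorSemiring.tendsto_pow_div_factorial_atTop x).comp
    (tendsto_id.const_mul_atTop' two_pos)

open Nat in
theorem eq_zero_of_coupled_second_order {g g' g'' : ℤ → ℝ → ℂ} {μ : ℤ → ℂ} {r c C M : ℝ}
    (hμ : ∀ n, 0 ≤ (μ n).re) (hM : 0 ≤ M)
    (hg : ∀ n, ∀ t ∈ Icc r c, HasDerivWithinAt (g n) (g' n t) (Icc r c) t)
    (hg' : ∀ n, ∀ t ∈ Icc r c, HasDerivWithinAt (g' n) (g'' n t) (Icc r c) t)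
    (hg'' : ∀ n, ContinuousOn (g'' n) (Icc r c)) (hc : ∀ n, g n c = 0 ∧ g' n c = 0)
    (hC : ∀ n, ∀ t ∈ Icc r c, Real.exp ((μ n).re * t) * ‖g n t‖ ≤ C)
    (hcoupling : ∀ n, ∀ t ∈ Icc r c,
      Real.exp ((μ n).re * t) * ‖g'' n t - μ n ^ 2 * g n t‖ ≤
        M * (Real.exp ((μ (n - 1)).re * t) * ‖g (n - 1) t‖ + Real.exp ((μ n).re * t) * ‖g n t‖
          + Real.exp ((μ (n + 1)).re * t) * ‖g (n + 1) t‖)) :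
    ∀ n, ∀ t ∈ Icc r c, g n t = 0 := by
  have hiter : ∀ k : ℕ, ∀ n, ∀ t ∈ Icc r c,
      Real.exp ((μ n).re * t) * ‖g n t‖ ≤ C * (3 * M) ^ k * (c - t) ^ (2 * k) / (2 * k)! := by
    intro k
    induction k with
    | zero => simpa using hC
    | succ k ih =>
      intro n s hs
      have hsub : Icc s c ⊆ Icc r c := Icc_subset_Icc_left hs.1
      have hR : ∀ t ∈ Icc s c, Real.exp ((μ n).re * t) * ‖g'' n t - μ n ^ 2 * g n t‖ ≤
          3 * M * (C * (3 * M) ^ k / (2 * k)!) * (c - t) ^ (2 * k) := by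
        intro t ht
        have ht' := hsub ht
        refine (hcoupling n t ht').trans ?_
        have := add_le_add (add_le_add (ih (n - 1) t ht') (ih n t ht')) (ih (n + 1) t ht')
        calc _ ≤ M * (3 * (C * (3 * M) ^ k * (c - t) ^ (2 * k) / (2 * k)!)) := by
              gcongr; linarith
          _ = _ := by ring
      refine (exp_mul_norm_le_of_deriv2_sub_sq_mul_le hs.2 (hμ n)
        (fun t ht => (hg n t (hsub ht)).mono hsub) (fun t ht => (hg' n t (hsub ht)).mono hsub)
        ((hg'' n).mono hsub) (hc n).1 (hc n).2 hR).trans_eq ?_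
      rw [show 2 * (k + 1) = 2 * k + 1 + 1 by ring, factorial_succ, factorial_succ]
      push_cast
      field_simp
      ring
  intro n t ht
  have hlim : Tendsto (fun k : ℕ => C * (3 * M) ^ k * (c - t) ^ (2 * k) / (2 * k)!)
      atTop (𝓝 0) := by
    have := (tendsto_pow_two_mul_div_factorial (√(3 * M) * (c - t))).const_mul C
    simp only [mul_zero, mul_pow, pow_mul, Real.sq_sqrt (by positivity : 0 ≤ 3 * M)] at this
    convert this using 2 with k
    rw [pow_mul]
    ring
  have hle : Real.exp ((μ n).re * t) * ‖g n t‖ ≤ 0 := ge_of_tendsto' hlim fun k => hiter k n t ht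
  simpa [(Real.exp_pos _).ne'] using le_antisymm hle (by positivity)

theorem exists_sq_eq_ofReal_and_re_eq_sqrt (x : ℝ) : ∃ z : ℂ, z ^ 2 = x ∧ z.re = √x := by
  rcases le_total 0 x with hx | hx
  · exact ⟨√x, by rw [← Complex.ofReal_pow, Real.sq_sqrt hx], Complex.ofReal_re _⟩
  · refine ⟨Complex.I * √(-x), ?_, by simp [Real.sqrt_eq_zero'.mpr hx]⟩
    rw [mul_pow, Complex.I_sq, ← Complex.ofReal_pow, Real.sq_sqrt (by linarith)]
    push_cast
    ring

theorem exp_sqrt_mul_mul_le {ω x y t : ℝ} (hω : 0 ≤ ω) (hxy : x ≤ y + 1)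
    (ht : t ∈ Icc (0 : ℝ) 1) :
    Real.exp (√(x * ω) * t) ≤ Real.exp √ω * Real.exp (√(y * ω) * t) := by
  have hsqrt : √(x * ω) ≤ √(y * ω) + √ω := by
    rw [Real.sqrt_le_left (by positivity)]
    nlinarith [Real.sq_sqrt hω, le_max_left (y * ω) 0, Real.sq_sqrt' (x := y * ω),
      Real.sqrt_nonneg (y * ω), Real.sqrt_nonneg ω]
  rw [← Real.exp_add, Real.exp_le_exp]
  nlinarith [Real.sqrt_nonneg ω, ht.1, ht.2]

theorem exp_sqrt_mul_norm_coupling_le {ω t D K w : ℝ} {V : ℂ} (hω : 0 ≤ ω)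
    (ht : t ∈ Icc (0 : ℝ) 1) (hV : ‖V‖ ≤ D) (hw : |w| ≤ K) (z : ℤ → ℂ) (n : ℤ) :
    Real.exp (√(n * ω) * t) * ‖V * z n + Complex.I * w * (z (n + 1) - z (n - 1))‖ ≤
      (D + K * Real.exp √ω) * (Real.exp (√((n - 1 : ℤ) * ω) * t) * ‖z (n - 1)‖
        + Real.exp (√(n * ω) * t) * ‖z n‖
        + Real.exp (√((n + 1 : ℤ) * ω) * t) * ‖z (n + 1)‖) := by
  have hD : 0 ≤ D := (norm_nonneg _).trans hV
  have hK : 0 ≤ K := (abs_nonneg _).trans hw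
  have hnorm : ‖V * z n + Complex.I * w * (z (n + 1) - z (n - 1))‖ ≤
      D * ‖z n‖ + K * (‖z (n + 1)‖ + ‖z (n - 1)‖) := by
    refine (norm_add_le _ _).trans (add_le_add ?_ ?_)
    · rw [norm_mul]; gcongr
    · rw [norm_mul, norm_mul, Complex.norm_I, one_mul, Complex.norm_real, Real.norm_eq_abs]
      exact mul_le_mul hw (norm_sub_le _ _) (norm_nonneg _) hK
  have hup := exp_sqrt_mul_mul_le (x := n) (y := (n + 1 : ℤ)) hω (by push_cast; linarith) ht
  have hdown := exp_sqrt_mul_mul_le (x := n) (y := (n - 1 : ℤ)) hω (by push_cast; linarith) ht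
  calc _ ≤ Real.exp (√(n * ω) * t) * (D * ‖z n‖ + K * (‖z (n + 1)‖ + ‖z (n - 1)‖)) := by
        gcongr
    _ = D * (Real.exp (√(n * ω) * t) * ‖z n‖) + K * (Real.exp (√(n * ω) * t) * ‖z (n + 1)‖
          + Real.exp (√(n * ω) * t) * ‖z (n - 1)‖) := by ring
    _ ≤ D * (Real.exp (√(n * ω) * t) * ‖z n‖)
          + K * (Real.exp √ω * Real.exp (√((n + 1 : ℤ) * ω) * t) * ‖z (n + 1)‖
          + Real.exp √ω * Real.exp (√((n - 1 : ℤ) * ω) * t) * ‖z (n - 1)‖) := by gcongr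
    _ ≤ _ := by
        have : 0 ≤ D * (Real.exp (√((n - 1 : ℤ) * ω) * t) * ‖z (n - 1)‖
            + Real.exp (√((n + 1 : ℤ) * ω) * t) * ‖z (n + 1)‖)
            + K * Real.exp √ω * (Real.exp (√(n * ω) * t) * ‖z n‖) := by positivity
        linarith

theorem exists_norm_div_add_add_div_sq_le (α β γ : ℂ) {r₀ c : ℝ} (hr₀ : 0 < r₀) :
    ∃ D, ∀ t ∈ Icc r₀ c, ‖α / t + β + γ / (t : ℂ) ^ 2‖ ≤ D := by
  have ht0 : ∀ t ∈ Icc r₀ c, (t : ℂ) ≠ 0 := fun t ht =>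
    Complex.ofReal_ne_zero.mpr (hr₀.trans_le ht.1).ne'
  exact isCompact_Icc.exists_bound_of_continuousOn
    (((continuousOn_const.div (by fun_prop) ht0).add continuousOn_const).add
      (continuousOn_const.div (by fun_prop) fun t ht => pow_ne_zero 2 (ht0 t ht)))

theorem stmt_10_general (ω : ℝ) (hω : 0 < ω) (b : ℝ) (l : ℕ) (p₁ : ℂ)
    (Ω : ℝ → ℝ)
    (hΩb : ∃ CΩ : ℝ, ∀ r ∈ Set.Ioc (0 : ℝ) 1, |Ω r| ≤ CΩ)
    (g g' g'' : ℤ → ℝ → ℂ)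
    (hg : ∀ n : ℤ, ∀ r ∈ Set.Ioc (0 : ℝ) 1, HasDerivWithinAt (g n) (g' n r) (Set.Ioc 0 1) r)
    (hg' : ∀ n : ℤ, ∀ r ∈ Set.Ioc (0 : ℝ) 1, HasDerivWithinAt (g' n) (g'' n r) (Set.Ioc 0 1) r)
    (hg'' : ∀ n : ℤ, ContinuousOn (g'' n) (Set.Ioc 0 1))
    (hode : ∀ n : ℤ, ∀ r ∈ Set.Ioc (0 : ℝ) 1,
      g'' n r = (-(b : ℂ) / (r : ℂ) + (n : ℂ) * (ω : ℂ) - Complex.I * p₁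
          + (l * (l + 1) : ℂ) / (r : ℂ) ^ 2) * g n r
        + Complex.I * (Ω r : ℂ) * (g (n + 1) r - g (n - 1) r))
    (hbddPos : ∃ C : ℝ, ∀ n : ℤ, 0 ≤ n → ∀ r ∈ Set.Ioc (0 : ℝ) 1,
      Real.exp (r * Real.sqrt ((n : ℝ) * ω)) * ‖g n r‖ ≤ C)
    (hbddNeg : ∃ C : ℝ, ∀ n : ℤ, n < 0 → ∀ r ∈ Set.Ioc (0 : ℝ) 1, ‖g n r‖ ≤ C)
    (hbc : ∀ n : ℤ, g n 1 = 0 ∧ g' n 1 = 0) :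
    ∀ n : ℤ, ∀ r ∈ Set.Ioc (0 : ℝ) 1, g n r = 0 := by
  intro n₀ r₀ hr₀
  obtain ⟨K, hK⟩ := hΩb
  obtain ⟨C₁, hC₁⟩ := hbddPos
  obtain ⟨C₂, hC₂⟩ := hbddNeg
  -- `√(n ω) = 0` for `n < 0`, so one weight `e^{t √(n ω)}` covers both bounds
  choose μ hμsq hμre using fun n : ℤ => exists_sq_eq_ofReal_and_re_eq_sqrt (n * ω)
  have hsub : Icc r₀ 1 ⊆ Ioc 0 1 := fun t ht => ⟨hr₀.1.trans_le ht.1, ht.2⟩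
  obtain ⟨D, hD⟩ := exists_norm_div_add_add_div_sq_le (-b) (-(Complex.I * p₁)) (l * (l + 1))
    (c := 1) hr₀.1
  refine eq_zero_of_coupled_second_order (μ := μ) (C := max C₁ C₂) (M := D + K * Real.exp √ω)
    (fun n => (hμre n).symm ▸ Real.sqrt_nonneg _) ?_ (fun n t ht => (hg n t (hsub ht)).mono hsub)
    (fun n t ht => (hg' n t (hsub ht)).mono hsub) (fun n => (hg'' n).mono hsub) hbc ?_ ?_
    n₀ r₀ ⟨le_rfl, hr₀.2⟩
  · exact add_nonneg ((norm_nonneg _).trans (hD 1 ⟨hr₀.2, le_rfl⟩))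
      (mul_nonneg ((abs_nonneg _).trans (hK 1 ⟨one_pos, le_rfl⟩)) (Real.exp_pos _).le)
  · intro n t ht
    rw [hμre, mul_comm (√_)]
    rcases le_or_gt 0 n with hn | hn
    · exact (hC₁ n hn t (hsub ht)).trans (le_max_left _ _)
    · rw [Real.sqrt_eq_zero'.mpr (mul_nonpos_of_nonpos_of_nonneg (by exact_mod_cast hn.le) hω.le),
        mul_zero, Real.exp_zero, one_mul]
      exact (hC₂ n hn t (hsub ht)).trans (le_max_right _ _)
  · intro n t ht
    rw [hode n t (hsub ht), hμsq, hμre, hμre, hμre]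
    convert exp_sqrt_mul_norm_coupling_le hω.le ⟨(hsub ht).1.le, ht.2⟩ (hD t ht) (hK t (hsub ht))
      (g · t) n using 3
    push_cast
    ring

/-- Lemma 30 in contrapositive form: for the radial differential–difference system (80),
a solution `(g_n)` that is bounded (with the weight `e^{r√(nω)}` for `n ≥ 0`) and whose
Cauchy data at `r = 1` vanish for every `n` must vanish identically on `(0,1]`. -/
theorem stmt_10 (ω : ℝ) (hω : 0 < ω) (b : ℝ) (l : ℕ) (p₁ : ℂ)
    (Ω : ℝ → ℝ) (hΩc : ContinuousOn Ω (Set.Ioc 0 1))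
    (hΩb : ∃ CΩ : ℝ, ∀ r ∈ Set.Ioc (0 : ℝ) 1, |Ω r| ≤ CΩ)
    (g g' g'' : ℤ → ℝ → ℂ)
    (hg : ∀ n : ℤ, ∀ r ∈ Set.Ioc (0 : ℝ) 1, HasDerivWithinAt (g n) (g' n r) (Set.Ioc 0 1) r)
    (hg' : ∀ n : ℤ, ∀ r ∈ Set.Ioc (0 : ℝ) 1, HasDerivWithinAt (g' n) (g'' n r) (Set.Ioc 0 1) r)
    (hg'' : ∀ n : ℤ, ContinuousOn (g'' n) (Set.Ioc 0 1))
    (hode : ∀ n : ℤ, ∀ r ∈ Set.Ioc (0 : ℝ) 1,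
      g'' n r = (-(b : ℂ) / (r : ℂ) + (n : ℂ) * (ω : ℂ) - Complex.I * p₁
          + (l * (l + 1) : ℂ) / (r : ℂ) ^ 2) * g n r
        + Complex.I * (Ω r : ℂ) * (g (n + 1) r - g (n - 1) r))
    (hbddPos : ∃ C : ℝ, ∀ n : ℤ, 0 ≤ n → ∀ r ∈ Set.Ioc (0 : ℝ) 1,
      Real.exp (r * Real.sqrt ((n : ℝ) * ω)) * ‖g n r‖ ≤ C)
    (hbddNeg : ∃ C : ℝ, ∀ n : ℤ, n < 0 → ∀ r ∈ Set.Ioc (0 : ℝ) 1, ‖g n r‖ ≤ C)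
    (hbc : ∀ n : ℤ, g n 1 = 0 ∧ g' n 1 = 0) :
    ∀ n : ℤ, ∀ r ∈ Set.Ioc (0 : ℝ) 1, g n r = 0 :=
  stmt_10_general ω hω b l p₁ Ω hΩb g g' g'' hg hg' hg'' hode hbddPos hbddNeg hbc
end

section
/- Let d > 0 and a > 0, and let F : ℂ → ℂ be analytic on an open set containing the closed unit disk. Then there exists a constant C > 0 such that for every t ≥ 1: |∫₀^a F( exp( i·d·s^{−1/2} ) )·e^{i·s·t} ds| ≤ C·t^{−5/6}. -/
/-!
Expand `F` in its Taylor series `∑ bₙ zⁿ` at `0`; since `F` is analytic beyond the closed unit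
disk, the coefficients decay geometrically. On `|z| = 1` the integral becomes
`∑ bₙ ∫₀^a exp(i(st + dn s^{-1/2})) ds`. The phase `st + c s^{-1/2}` has a single stationary
point `s₀ = (c/2t)^{2/3}`, and its derivative is increasing. Away from a window of width
`≍ (1 + c) t^{-5/6}` around `s₀` (and away from `0`) the derivative is `≳ t^{1/6}`, so the van der
Corput first-derivative test bounds the integral by `O((1 + c) t^{-5/6})`. Summing against the
geometrically decaying `‖bₙ‖` gives the claim.
-/

open Complex MeasureTheory intervalIntegral Set
open scoped Interval

theorem norm_integral_exp_I_mul_le_of_le_abs_deriv {φ φ' φ'' : ℝ → ℝ} {α β m : ℝ}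
    (hαβ : α ≤ β) (hm : 0 < m)
    (hφ : ∀ s ∈ Icc α β, HasDerivAt φ (φ' s) s)
    (hφ' : ∀ s ∈ Icc α β, HasDerivAt φ' (φ'' s) s)
    (hφ''_cont : ContinuousOn φ'' (Icc α β)) (hφ''_nonneg : ∀ s ∈ Icc α β, 0 ≤ φ'' s)
    (hmφ' : ∀ s ∈ Icc α β, m ≤ |φ' s|) :
    ‖∫ s in α..β, exp (I * φ s)‖ ≤ 4 / m := by
  rw [← uIcc_of_le hαβ] at hφ hφ' hφ''_cont hφ''_nonneg hmφ'
  have hφ'_ne (s) (hs : s ∈ [[α, β]]) : φ' s ≠ 0 := abs_pos.mp (hm.trans_le (hmφ' s hs))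
  have hφ'_cont : ContinuousOn φ' [[α, β]] := fun s hs =>
    (hφ' s hs).continuousAt.continuousWithinAt
  have hφ_cont : ContinuousOn φ [[α, β]] := fun s hs =>
    (hφ s hs).continuousAt.continuousWithinAt
  have hg_cont : ContinuousOn (fun s => φ'' s / φ' s ^ 2) [[α, β]] :=
    hφ''_cont.div (hφ'_cont.pow 2) fun s hs => pow_ne_zero 2 (hφ'_ne s hs)
  -- integrate by parts with `u = -I / φ'` and `v = exp (I * φ)`, so that `u * v' = exp (I * φ)`
  have hu (s) (hs : s ∈ [[α, β]]) :
      HasDerivAt (fun s => -I / φ' s) (I * ((φ'' s / φ' s ^ 2 : ℝ) : ℂ)) s := by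
    have : (φ' s : ℂ) ≠ 0 := by exact_mod_cast hφ'_ne s hs
    refine ((hasDerivAt_const s (-I)).div (hφ' s hs).ofReal_comp this).congr_deriv ?_
    push_cast
    ring
  have hv (s) (hs : s ∈ [[α, β]]) :
      HasDerivAt (fun s => exp (I * φ s)) (exp (I * φ s) * (I * φ' s)) s :=
    ((hφ s hs).ofReal_comp.const_mul I).cexp
  have ibp := integral_mul_deriv_eq_deriv_mul hu hv
    ((continuous_ofReal.comp_continuousOn hg_cont).const_smul I).intervalIntegrable
    ((continuous_exp.comp_continuousOn
      ((continuous_ofReal.comp_continuousOn hφ_cont).const_smul I)).mul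
        ((continuous_ofReal.comp_continuousOn hφ'_cont).const_smul I)).intervalIntegrable
  have hlhs : ∫ s in α..β, -I / φ' s * (exp (I * φ s) * (I * φ' s)) =
      ∫ s in α..β, exp (I * φ s) :=
    integral_congr fun s hs => by
      have : (φ' s : ℂ) ≠ 0 := by exact_mod_cast hφ'_ne s hs
      field_simp
      simp [I_sq]
  have hbdry (s) (hs : s ∈ [[α, β]]) : ‖-I / φ' s * exp (I * φ s)‖ ≤ m⁻¹ := by
    simpa [norm_exp] using inv_anti₀ hm (hmφ' s hs)
  have hrem : ‖∫ s in α..β, I * ((φ'' s / φ' s ^ 2 : ℝ) : ℂ) * exp (I * φ s)‖ ≤ 2 / m := by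
    calc _ ≤ ∫ s in α..β, φ'' s / φ' s ^ 2 := by
          refine (intervalIntegral.norm_integral_le_integral_norm hαβ).trans_eq
            (integral_congr fun s hs => ?_)
          simp [norm_exp, abs_of_nonneg (hφ''_nonneg s hs)]
      _ = (φ' α)⁻¹ - (φ' β)⁻¹ := by
          rw [integral_eq_sub_of_hasDerivAt (f := fun s => -(φ' s)⁻¹)
            (fun s hs => ((hφ' s hs).inv (hφ'_ne s hs)).neg.congr_deriv (by ring))
            hg_cont.intervalIntegrable]
          ring
      _ ≤ |φ' α|⁻¹ + |φ' β|⁻¹ := by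
          rw [← abs_inv, ← abs_inv]
          linarith [le_abs_self (φ' α)⁻¹, neg_abs_le (φ' β)⁻¹]
      _ ≤ m⁻¹ + m⁻¹ := add_le_add (inv_anti₀ hm (hmφ' α left_mem_uIcc))
          (inv_anti₀ hm (hmφ' β right_mem_uIcc))
      _ = 2 / m := by ring
  rw [← hlhs, ibp]
  calc _ ≤ ‖-I / φ' β * exp (I * φ β)‖ + ‖-I / φ' α * exp (I * φ α)‖
        + ‖∫ s in α..β, I * ((φ'' s / φ' s ^ 2 : ℝ) : ℂ) * exp (I * φ s)‖ :=
          (norm_sub_le _ _).trans (add_le_add_left (norm_sub_le _ _) _)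
    _ ≤ m⁻¹ + m⁻¹ + 2 / m :=
        add_le_add (add_le_add (hbdry β right_mem_uIcc) (hbdry α left_mem_uIcc)) hrem
    _ = 4 / m := by ring

theorem norm_integral_exp_I_mul_le_sub {φ : ℝ → ℝ} {α β : ℝ} (hαβ : α ≤ β) :
    ‖∫ s in α..β, exp (I * φ s)‖ ≤ β - α := by
  simpa [norm_exp_I_mul_ofReal, abs_of_nonneg (sub_nonneg.2 hαβ)] using
    norm_integral_le_of_norm_le_const (a := α) (b := β) (C := 1) (f := fun s => exp (I * φ s))
      fun s _ => (norm_exp_I_mul_ofReal _).le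

theorem norm_integral_exp_I_mul_le_of_le_abs_deriv_of_notMem_Ioo {φ φ' φ'' : ℝ → ℝ}
    {α β u v m : ℝ} (hαβ : α ≤ β) (huv : u ≤ v) (hm : 0 < m)
    (hφ : ∀ s ∈ Icc α β, HasDerivAt φ (φ' s) s)
    (hφ' : ∀ s ∈ Icc α β, HasDerivAt φ' (φ'' s) s)
    (hφ''_cont : ContinuousOn φ'' (Icc α β)) (hφ''_nonneg : ∀ s ∈ Icc α β, 0 ≤ φ'' s)
    (hmφ' : ∀ s ∈ Icc α β, s ∉ Ioo u v → m ≤ |φ' s|) :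
    ‖∫ s in α..β, exp (I * φ s)‖ ≤ (v - u) + 8 / m := by
  have hpiece {γ δ : ℝ} (hαγ : α ≤ γ) (hγδ : γ ≤ δ) (hδβ : δ ≤ β)
      (h : ∀ s ∈ Icc γ δ, m ≤ |φ' s|) : ‖∫ s in γ..δ, exp (I * φ s)‖ ≤ 4 / m :=
    have hsub : Icc γ δ ⊆ Icc α β := Icc_subset_Icc hαγ hδβ
    norm_integral_exp_I_mul_le_of_le_abs_deriv hγδ hm (fun s hs => hφ s (hsub hs))
      (fun s hs => hφ' s (hsub hs)) (hφ''_cont.mono hsub) (fun s hs => hφ''_nonneg s (hsub hs)) h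
  have hint : IntervalIntegrable (fun s => exp (I * φ s)) volume α β := by
    refine ContinuousOn.intervalIntegrable ?_
    rw [uIcc_of_le hαβ]
    exact continuous_exp.comp_continuousOn <| (continuous_ofReal.comp_continuousOn
      fun s hs => (hφ s hs).continuousAt.continuousWithinAt).const_smul I
  -- clamp the exceptional interval `(u, v)` into `[α, β]`
  set u' := max α (min u β)
  set v' := max u' (min v β)
  have hαu' : α ≤ u' := le_max_left _ _
  have hu'v' : u' ≤ v' := le_max_left _ _
  have hv'β : v' ≤ β := max_le (max_le hαβ (min_le_right _ _)) (min_le_right _ _)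
  have hint' {γ δ : ℝ} (hγ : γ ∈ Icc α β) (hδ : δ ∈ Icc α β) :
      IntervalIntegrable (fun s => exp (I * φ s)) volume γ δ :=
    hint.mono_set (uIcc_subset_uIcc (by rwa [uIcc_of_le hαβ]) (by rwa [uIcc_of_le hαβ]))
  have hu'_mem : u' ∈ Icc α β := ⟨hαu', hu'v'.trans hv'β⟩
  have hv'_mem : v' ∈ Icc α β := ⟨hαu'.trans hu'v', hv'β⟩
  rw [← integral_add_adjacent_intervals (hint' ⟨le_rfl, hαβ⟩ hv'_mem)
      (hint' hv'_mem ⟨hαβ, le_rfl⟩),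
    ← integral_add_adjacent_intervals (hint' ⟨le_rfl, hαβ⟩ hu'_mem) (hint' hu'_mem hv'_mem)]
  have hleft : ‖∫ s in α..u', exp (I * φ s)‖ ≤ 4 / m := by
    rcases hαu'.eq_or_lt with h | h
    · rw [← h, integral_same, norm_zero]; positivity
    · refine hpiece le_rfl hαu' (hu'v'.trans hv'β) fun s hs => hmφ' s ⟨hs.1, hs.2.trans
        (hu'v'.trans hv'β)⟩ fun hs' => ?_
      have : u' ≤ u := by
        simp only [u', max_def, min_def] at h ⊢
        split_ifs at h ⊢ <;> linarith
      linarith [hs'.1, hs.2]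
  have hmid : ‖∫ s in u'..v', exp (I * φ s)‖ ≤ v - u := by
    refine (norm_integral_exp_I_mul_le_sub hu'v').trans ?_
    simp only [u', v', max_def, min_def]
    split_ifs <;> linarith
  have hright : ‖∫ s in v'..β, exp (I * φ s)‖ ≤ 4 / m := by
    rcases hv'β.eq_or_lt with h | h
    · rw [h, integral_same, norm_zero]; positivity
    · refine hpiece (hαu'.trans hu'v') hv'β le_rfl fun s hs =>
        hmφ' s ⟨hαu'.trans (hu'v'.trans hs.1), hs.2⟩ fun hs' => ?_
      have : v ≤ v' := by
        simp only [v', u', max_def, min_def] at h ⊢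
        split_ifs at h ⊢ <;> linarith
      linarith [hs'.2, hs.1]
  calc _ ≤ ‖∫ s in α..u', exp (I * φ s)‖ + ‖∫ s in u'..v', exp (I * φ s)‖
        + ‖∫ s in v'..β, exp (I * φ s)‖ := norm_add₃_le
    _ ≤ 4 / m + (v - u) + 4 / m := add_le_add (add_le_add hleft hmid) hright
    _ = (v - u) + 8 / m := by ring

theorem abs_one_sub_le_abs_one_sub_rpow {x p : ℝ} (hx : 0 ≤ x) (hp : 1 ≤ p) :
    |1 - x| ≤ |1 - x ^ p| := by
  rcases le_total x 1 with h | h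
  · have := Real.rpow_le_self_of_le_one hx h hp
    rw [abs_of_nonneg (by linarith), abs_of_nonneg (by linarith)]
    linarith
  · have := Real.self_le_rpow_of_one_le h hp
    rw [abs_of_nonpos (by linarith), abs_of_nonpos (by linarith)]
    linarith

theorem div_le_abs_one_sub_div {s s₀ L : ℝ} (hs : 0 < s) (hs₀ : 0 ≤ s₀) (hL : 0 < L)
    (h : s ∉ Ioo (s₀ - L) (s₀ + L)) : L / (s₀ + L) ≤ |1 - s₀ / s| := by
  rw [one_sub_div hs.ne', abs_div, abs_of_pos hs, div_le_div_iff₀ (by positivity) hs]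
  rcases not_and_or.mp h with h | h <;> rw [not_lt] at h
  · rw [abs_of_nonpos (by linarith)]
    nlinarith
  · rw [abs_of_nonneg (by linarith)]
    nlinarith

theorem hasDerivAt_mul_add_mul_rpow_neg_half (t c : ℝ) {s : ℝ} (hs : 0 < s) :
    HasDerivAt (fun s => s * t + c * s ^ (-(1 : ℝ) / 2)) (t - c / 2 * s ^ (-(3 : ℝ) / 2)) s := by
  refine (((hasDerivAt_id s).mul_const t).add
    ((Real.hasDerivAt_rpow_const (p := -(1 : ℝ) / 2) (Or.inl hs.ne')).const_mul c)).congr_deriv ?_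
  rw [show -(1 : ℝ) / 2 - 1 = -(3 : ℝ) / 2 by norm_num]
  ring

theorem hasDerivAt_sub_mul_rpow_neg_three_halves (t c : ℝ) {s : ℝ} (hs : 0 < s) :
    HasDerivAt (fun s => t - c / 2 * s ^ (-(3 : ℝ) / 2)) (3 * c / 4 * s ^ (-(5 : ℝ) / 2)) s := by
  refine (((Real.hasDerivAt_rpow_const (p := -(3 : ℝ) / 2) (Or.inl hs.ne')).const_mul
    (c / 2)).const_sub t).congr_deriv ?_
  rw [show -(3 : ℝ) / 2 - 1 = -(5 : ℝ) / 2 by norm_num]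
  ring

theorem sub_mul_rpow_neg_three_halves_eq {t c s : ℝ} (ht : 0 < t) (hc : 0 ≤ c) (hs : 0 < s) :
    t - c / 2 * s ^ (-(3 : ℝ) / 2) =
      t * (1 - ((c / (2 * t)) ^ ((2 : ℝ) / 3) / s) ^ ((3 : ℝ) / 2)) := by
  rw [Real.div_rpow (by positivity) hs.le, ← Real.rpow_mul (by positivity),
    show -(3 : ℝ) / 2 = -((3 : ℝ) / 2) by ring, Real.rpow_neg hs.le]
  norm_num
  field_simp

theorem norm_integral_exp_I_mul_mul_add_mul_rpow_neg_half_le {a c t : ℝ} (ha : 0 < a)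
    (hc : 0 ≤ c) (ht : 1 ≤ t) :
    ‖∫ s in (0 : ℝ)..a, exp (I * ((s * t + c * s ^ (-(1 : ℝ) / 2) : ℝ) : ℂ))‖ ≤
      19 * (1 + c) * t ^ (-(5 : ℝ) / 6) := by
  have ht₀ : 0 < t := one_pos.trans_le ht
  -- `s₀` is the stationary point of the phase; outside the window `(s₀ - L, s₀ + L)` the
  -- derivative of the phase is at least `m ≍ t^{1/6}`
  set ε := t ^ (-(5 : ℝ) / 6)
  set L := (1 + c) * ε
  set s₀ := (c / (2 * t)) ^ ((2 : ℝ) / 3)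
  set m := t * L / (s₀ + L)
  set ε' := min ε a
  have hε : 0 < ε := by positivity
  have hL : 0 < L := by positivity
  have hs₀ : 0 ≤ s₀ := by positivity
  have hε' : 0 < ε' := lt_min hε ha
  have ht_inv : t⁻¹ ≤ ε := by
    rw [← Real.rpow_neg_one]
    exact Real.rpow_le_rpow_of_exponent_le ht (by norm_num)
  have hs₀_le : s₀ ≤ t * L * ε := by
    have hc' : (c / 2) ^ ((2 : ℝ) / 3) ≤ 1 + c := by
      calc (c / 2) ^ ((2 : ℝ) / 3) ≤ (1 + c / 2) ^ ((2 : ℝ) / 3) := by gcongr; linarith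
        _ ≤ 1 + 2 / 3 * (c / 2) :=
          rpow_one_add_le_one_add_mul_self (by linarith) (by norm_num) (by norm_num)
        _ ≤ 1 + c := by linarith
    have ht' : t * ε * ε = (t⁻¹) ^ ((2 : ℝ) / 3) := by
      rw [mul_assoc, ← Real.rpow_add ht₀, ← Real.rpow_one_add' ht₀.le (by norm_num),
        Real.inv_rpow ht₀.le, ← Real.rpow_neg ht₀.le]
      norm_num
    calc s₀ = (c / 2) ^ ((2 : ℝ) / 3) * (t⁻¹) ^ ((2 : ℝ) / 3) := by
          rw [← Real.mul_rpow (by positivity) (by positivity), ← div_eq_mul_inv, div_div]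
      _ ≤ (1 + c) * (t⁻¹) ^ ((2 : ℝ) / 3) := by gcongr
      _ = t * L * ε := by rw [← ht']; ring
  have hm : 8 / m ≤ 16 * ε := by
    have hm_eq : 8 / m = 8 * (s₀ / (t * L)) + 8 * t⁻¹ := by simp only [m]; field_simp
    have : s₀ / (t * L) ≤ ε := by rwa [div_le_iff₀ (by positivity), mul_comm]
    linarith
  have hmφ' (s) (hs : s ∈ Icc ε' a) (hs_out : s ∉ Ioo (s₀ - L) (s₀ + L)) :
      m ≤ |t - c / 2 * s ^ (-(3 : ℝ) / 2)| := by
    have hs₀' : 0 < s := hε'.trans_le hs.1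
    rw [sub_mul_rpow_neg_three_halves_eq ht₀ hc hs₀', abs_mul, abs_of_pos ht₀,
      show m = t * (L / (s₀ + L)) from mul_div_assoc _ _ _]
    gcongr
    exact (div_le_abs_one_sub_div hs₀' hs₀ hL hs_out).trans
      (abs_one_sub_le_abs_one_sub_rpow (by positivity) (by norm_num))
  have hint (α β : ℝ) : IntervalIntegrable
      (fun s : ℝ => exp (I * ((s * t + c * s ^ (-(1 : ℝ) / 2) : ℝ) : ℂ))) volume α β :=
    (intervalIntegrable_const (c := (1 : ℝ))).mono_fun' (by fun_prop)
      (.of_forall fun s => (norm_exp_I_mul_ofReal _).le)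
  rw [← integral_add_adjacent_intervals (hint 0 ε') (hint ε' a)]
  have hnear :=
    norm_integral_exp_I_mul_le_sub (φ := fun s => s * t + c * s ^ (-(1 : ℝ) / 2)) hε'.le
  have hfar := norm_integral_exp_I_mul_le_of_le_abs_deriv_of_notMem_Ioo (min_le_right ε a)
    (by linarith) (by positivity : 0 < m)
    (fun s hs => hasDerivAt_mul_add_mul_rpow_neg_half t c (hε'.trans_le hs.1))
    (fun s hs => hasDerivAt_sub_mul_rpow_neg_three_halves t c (hε'.trans_le hs.1))
    (continuousOn_const.mul (continuousOn_id.rpow_const fun s hs =>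
      Or.inl (hε'.trans_le hs.1).ne'))
    (fun s hs => by have := (hε'.trans_le hs.1).le; positivity) hmφ'
  calc _ ≤ ε' - 0 + (s₀ + L - (s₀ - L) + 8 / m) :=
        (norm_add_le _ _).trans (add_le_add hnear hfar)
    _ ≤ ε + 2 * L + 16 * ε := by linarith [min_le_left ε a]
    _ ≤ 19 * (1 + c) * ε := by nlinarith

theorem exists_hasSum_pow_smul_of_analyticOnNhd {E : Type*} [NormedAddCommGroup E]
    [NormedSpace ℂ E] [CompleteSpace E] {F : ℂ → E} {U : Set ℂ} {x : ℂ} {r : ℝ}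
    (hU : IsOpen U) (hr : 0 ≤ r) (hsub : Metric.closedBall x r ⊆ U) (hF : AnalyticOnNhd ℂ F U) :
    ∃ (b : ℕ → E) (ρ C : ℝ), r < ρ ∧ (∀ n, ‖b n‖ * ρ ^ n ≤ C) ∧
      ∀ z ∈ Metric.closedBall x r, HasSum (fun n => (z - x) ^ n • b n) (F z) := by
  obtain ⟨δ, hδ, hδU⟩ := (isCompact_closedBall x r).exists_cthickening_subset_open hU hsub
  rw [cthickening_closedBall hδ.le hr] at hδU
  let R : NNReal := ⟨δ + r, by positivity⟩
  let ρ : NNReal := ⟨δ / 2 + r, by positivity⟩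
  have hps := (hF.mono hδU).differentiableOn.hasFPowerSeriesOnBall (R := R) (by
    change (0 : ℝ) < δ + r; positivity)
  have hρR : (ρ : ENNReal) < R := by
    exact_mod_cast (show δ / 2 + r < δ + r by linarith)
  obtain ⟨C, -, hC⟩ :=
    (cauchyPowerSeries F x R).norm_mul_pow_le_of_lt_radius (hρR.trans_le hps.r_le)
  refine ⟨(cauchyPowerSeries F x R).coeff, ρ, C, by change r < δ / 2 + r; linarith,
    fun n => by rw [← FormalMultilinearSeries.norm_apply_eq_norm_coef]; exact hC n,
    fun z hz => ?_⟩
  have hz' : z - x ∈ Metric.eball (0 : ℂ) R := by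
    rw [Metric.eball_coe, mem_ball_zero_iff]
    rw [Metric.mem_closedBall, dist_eq_norm] at hz
    change ‖z - x‖ < δ + r
    linarith
  simpa [FormalMultilinearSeries.apply_eq_pow_smul_coeff] using hps.hasSum hz'

theorem summable_pow_mul_norm_of_norm_mul_pow_le {E : Type*} [NormedAddCommGroup E]
    {b : ℕ → E} {ρ C : ℝ} (hρ : 1 < ρ) (hC : ∀ n, ‖b n‖ * ρ ^ n ≤ C) (k : ℕ) :
    Summable fun n : ℕ => (n : ℝ) ^ k * ‖b n‖ := by
  have hρ₀ : 0 < ρ := one_pos.trans hρ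
  have hgeom := (summable_pow_mul_geometric_of_norm_lt_one k (r := ρ⁻¹)
    (by rw [norm_inv, Real.norm_of_nonneg hρ₀.le]; exact inv_lt_one_of_one_lt₀ hρ)).mul_left C
  have hC₀ : 0 ≤ C := (by positivity : 0 ≤ ‖b 0‖ * ρ ^ 0).trans (hC 0)
  refine hgeom.of_nonneg_of_le (fun n => by positivity) fun n => ?_
  have : ‖b n‖ ≤ C * (ρ⁻¹) ^ n := by
    rw [inv_pow, ← div_eq_mul_inv, le_div_iff₀ (by positivity)]
    exact hC n
  calc (n : ℝ) ^ k * ‖b n‖ ≤ (n : ℝ) ^ k * (C * (ρ⁻¹) ^ n) := by gcongr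
    _ = C * ((n : ℝ) ^ k * (ρ⁻¹) ^ n) := by ring

theorem hasSum_integral_mul_exp_of_hasSum {F : ℂ → ℂ} {b : ℕ → ℂ} {ψ χ : ℝ → ℝ}
    (hb : Summable fun n => ‖b n‖) (hF : ∀ z : ℂ, ‖z‖ = 1 → HasSum (fun n => z ^ n * b n) (F z))
    (hψ : Measurable ψ) (hχ : Measurable χ) (α β : ℝ) :
    HasSum (fun n : ℕ => b n * ∫ s in α..β, exp (I * ((χ s + n * ψ s : ℝ) : ℂ)))
      (∫ s in α..β, F (exp (I * ψ s)) * exp (I * χ s)) := by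
  simp only [← intervalIntegral.integral_const_mul]
  refine hasSum_integral_of_dominated_convergence (fun n _ => ‖b n‖)
    (fun n => (measurable_const.mul (by fun_prop)).aestronglyMeasurable)
    (fun n => .of_forall fun s _ => by rw [norm_mul, norm_exp_I_mul_ofReal, mul_one])
    (.of_forall fun _ _ => hb) (by simp) (.of_forall fun s _ => ?_)
  refine ((hF _ (norm_exp_I_mul_ofReal (ψ s))).mul_right (exp (I * χ s))).congr_fun fun n => ?_
  rw [← exp_nat_mul, mul_right_comm, ← exp_add, mul_comm]
  push_cast
  ring_nf

/-- Synthesis of the stationary phase analysis of §5.7: for `F` analytic on a neighborhood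
of the closed unit disk and `d, a > 0`, the oscillatory integral
`∫₀^a F(e^{i d s^{-1/2}}) e^{ist} ds` decays like `t^{-5/6}` as `t → ∞`. -/
theorem stmt_13 (d a : ℝ) (hd : 0 < d) (ha : 0 < a) (F : ℂ → ℂ)
    (hF : ∃ U : Set ℂ, IsOpen U ∧ Metric.closedBall (0 : ℂ) 1 ⊆ U ∧ AnalyticOnNhd ℂ F U) :
    ∃ C : ℝ, 0 < C ∧ ∀ t : ℝ, 1 ≤ t →
      ‖(∫ s in (0 : ℝ)..a,
          F (Complex.exp (Complex.I * ((d * s ^ (-(1 : ℝ) / 2) : ℝ) : ℂ))) *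
            Complex.exp (Complex.I * ((s * t : ℝ) : ℂ)))‖ ≤ C * t ^ (-(5 : ℝ) / 6) := by
  obtain ⟨U, hU, hsub, hFU⟩ := hF
  obtain ⟨b, ρ, C, hρ, hC, hFb⟩ :=
    exists_hasSum_pow_smul_of_analyticOnNhd hU zero_le_one hsub hFU
  have hb₀ := summable_pow_mul_norm_of_norm_mul_pow_le hρ hC 0
  have hb₁ := summable_pow_mul_norm_of_norm_mul_pow_le hρ hC 1
  simp only [pow_zero, one_mul, pow_one] at hb₀ hb₁
  set w : ℕ → ℝ := fun n => 19 * (‖b n‖ + d * (n * ‖b n‖))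
  have hw : Summable w := (hb₀.add (hb₁.mul_left d)).mul_left 19
  refine ⟨∑' n, w n + 1, by positivity, fun t ht => ?_⟩
  have hsum := hasSum_integral_mul_exp_of_hasSum hb₀
    (fun z hz => by simpa [smul_eq_mul] using hFb z (by simp [hz]))
    (ψ := fun s => d * s ^ (-(1 : ℝ) / 2)) (χ := fun s => s * t) (by fun_prop) (by fun_prop) 0 a
  refine (hsum.norm_le_of_bounded (hw.mul_right (t ^ (-(5 : ℝ) / 6))).hasSum
    fun n => ?_).trans ?_
  · have hphase (s : ℝ) :
        s * t + n * (d * s ^ (-(1 : ℝ) / 2)) = s * t + d * n * s ^ (-(1 : ℝ) / 2) := by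
      ring
    rw [norm_mul]
    simp only [hphase]
    calc _ ≤ ‖b n‖ * (19 * (1 + d * n) * t ^ (-(5 : ℝ) / 6)) :=
          mul_le_mul_of_nonneg_left
            (norm_integral_exp_I_mul_mul_add_mul_rpow_neg_half_le ha (by positivity) ht)
            (norm_nonneg _)
      _ = w n * t ^ (-(5 : ℝ) / 6) := by ring
  · rw [tsum_mul_right]
    gcongr
    linarith
end
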